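/- arXiv:2005.13442 — 6 statements merged into one kernel-verified Lean document; each statement's English description precedes it below -/
import Mathlib

section
/- If g : ℝ → X is Stepanov-bounded with exponent p > 1 (i.e., sup_{t∈ℝ} (∫_t^{t+1} ‖g(s)‖^p ds)^{1/p} =: ‖g‖_{BS^p} < ∞), and M, δ > 0, then for every t ∈ ℝ, ∫_{-∞}^t M e^{-δ(t-s)} ‖g(s)‖ ds ≤ M ‖g‖_{BS^p} ((e^{δq}-1)/(δq))^{1/q} · 1/(e^δ - 1), where q is the conjugate exponent of p. -/
/-!
Cut `(-∞, t]` into the unit intervals `(t - n - 1, t - n]`. On each of them Hölder's inequality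
bounds the integral of `e^{-δ(t-s)} ‖g s‖` by the Stepanov bound `C` times the `L^q` norm of the
weight, which is `e^{-δ(n+1)} ((e^{δq} - 1)/(δq))^{1/q}`; summing the geometric series
`∑ e^{-δ(n+1)} = 1/(e^δ - 1)` gives the bound. The estimate is carried out for lower Lebesgue
integrals, so the integrability of the convolution never has to be proved separately.
-/

open MeasureTheory Set Filter Real
open scoped ENNReal

theorem integral_Ioc_exp_neg_mul_sub {c : ℝ} (hc : c ≠ 0) (a t : ℝ) :
    ∫ s in Ioc a (a + 1), exp (-c * (t - s)) = exp (-c * (t - a)) * ((exp c - 1) / c) := by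
  have hderiv : ∀ s, HasDerivAt (fun u => exp (-c * (t - u)) / c) (exp (-c * (t - s))) s :=
    fun s => (((hasDerivAt_id s).const_sub t).const_mul (-c)).exp.div_const c |>.congr_deriv
      (by field_simp; simp)
  rw [← intervalIntegral.integral_of_le (by linarith),
    intervalIntegral.integral_eq_sub_of_hasDerivAt (fun s _ => hderiv s)
      ((by fun_prop : Continuous fun s => exp (-c * (t - s))).intervalIntegrable _ _),
    show -c * (t - (a + 1)) = -c * (t - a) + c by ring, exp_add]
  ring

theorem exp_sub_one_div_nonneg (x : ℝ) : 0 ≤ (exp x - 1) / x := by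
  rcases le_total 0 x with hx | hx
  · exact div_nonneg (sub_nonneg.mpr (one_le_exp hx)) hx
  · exact div_nonneg_of_nonpos (sub_nonpos.mpr (exp_le_one_iff.mpr hx)) hx

theorem lintegral_Ioc_ofReal_exp_rpow {δ q : ℝ} (hδ : 0 < δ) (hq : 0 < q) (a t : ℝ) :
    (∫⁻ s in Ioc a (a + 1), ENNReal.ofReal (exp (-δ * (t - s))) ^ q) ^ (1 / q) =
      ENNReal.ofReal (exp (-δ * (t - a)) * ((exp (δ * q) - 1) / (δ * q)) ^ (1 / q)) := by
  have hpow : ∀ s, ENNReal.ofReal (exp (-δ * (t - s))) ^ q =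
      ENNReal.ofReal (exp (-(δ * q) * (t - s))) := fun s => by
    rw [ENNReal.ofReal_rpow_of_nonneg (exp_pos _).le hq.le, ← exp_mul]
    ring_nf
  simp_rw [hpow]
  rw [← ofReal_integral_eq_lintegral_ofReal (by fun_prop : Continuous _).integrableOn_Ioc
      (.of_forall fun _ => (exp_pos _).le),
    integral_Ioc_exp_neg_mul_sub (by positivity) a t,
    ENNReal.ofReal_rpow_of_nonneg
      (mul_nonneg (exp_pos _).le (exp_sub_one_div_nonneg _)) (by positivity),
    mul_rpow (exp_pos _).le (exp_sub_one_div_nonneg _), ← exp_mul]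
  congr 3
  field_simp

theorem hasSum_exp_neg_mul_succ {δ : ℝ} (hδ : 0 < δ) :
    HasSum (fun n : ℕ => exp (-δ * (n + 1))) (1 / (exp δ - 1)) := by
  have hgeom := (hasSum_geometric_of_lt_one (exp_pos (-δ)).le
    (exp_lt_one_iff.mpr (neg_neg_of_pos hδ))).mul_left (exp (-δ))
  have hsum : exp (-δ) * (1 - exp (-δ))⁻¹ = 1 / (exp δ - 1) := by
    have : 1 < exp δ := one_lt_exp_iff.mpr hδ
    rw [exp_neg]
    field_simp
  have hterm : ∀ n : ℕ, exp (-δ) * exp (-δ) ^ n = exp (-δ * (n + 1)) := fun n => by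
    rw [← exp_nat_mul, ← exp_add]
    ring_nf
  simpa only [hsum, hterm] using hgeom

theorem iUnion_Ioc_sub_natCast (t : ℝ) : ⋃ n : ℕ, Ioc (t - (n + 1)) (t - n) = Iic t := by
  ext x
  simp only [mem_iUnion, mem_Ioc, mem_Iic]
  constructor
  · rintro ⟨n, -, hx⟩
    linarith [n.cast_nonneg (α := ℝ)]
  · intro hx
    refine ⟨⌊t - x⌋₊, ?_, ?_⟩
    · linarith [Nat.lt_floor_add_one (t - x)]
    · linarith [Nat.floor_le (sub_nonneg.mpr hx)]

theorem pairwise_disjoint_Ioc_sub_natCast (t : ℝ) :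
    Pairwise (Function.onFun Disjoint fun n : ℕ => Ioc (t - (n + 1)) (t - n)) := by
  have hanti : Antitone fun n : ℕ => t - n := fun _ _ h => sub_le_sub_left (Nat.cast_le.mpr h) t
  simpa using hanti.pairwise_disjoint_on_Ioc_succ

theorem lintegral_Iic_eq_tsum_Ioc (μ : Measure ℝ) (f : ℝ → ℝ≥0∞) (t : ℝ) :
    ∫⁻ s in Iic t, f s ∂μ = ∑' n : ℕ, ∫⁻ s in Ioc (t - (n + 1)) (t - n), f s ∂μ := by
  rw [← iUnion_Ioc_sub_natCast t,
    lintegral_iUnion (fun _ => measurableSet_Ioc) (pairwise_disjoint_Ioc_sub_natCast t)]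

section

variable {X : Type*} [NormedAddCommGroup X]

theorem lintegral_mul_ofReal_norm_le {α : Type*} [MeasurableSpace α]
    {μ : Measure α} {p q C : ℝ} (hpq : p.HolderConjugate q) {w : α → ℝ≥0∞}
    (hw : AEMeasurable w μ) {g : α → X} (hg : AEStronglyMeasurable g μ)
    (hgp : Integrable (fun s => ‖g s‖ ^ p) μ) (hC : (∫ s, ‖g s‖ ^ p ∂μ) ^ (1 / p) ≤ C) :
    ∫⁻ s, w s * ENNReal.ofReal ‖g s‖ ∂μ ≤ (∫⁻ s, w s ^ q ∂μ) ^ (1 / q) * ENNReal.ofReal C := by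
  have hnorm : ∫⁻ s, ENNReal.ofReal ‖g s‖ ^ p ∂μ = ENNReal.ofReal (∫ s, ‖g s‖ ^ p ∂μ) := by
    simp_rw [ENNReal.ofReal_rpow_of_nonneg (norm_nonneg _) hpq.nonneg]
    exact (ofReal_integral_eq_lintegral_ofReal hgp (.of_forall fun _ => by positivity)).symm
  calc ∫⁻ s, w s * ENNReal.ofReal ‖g s‖ ∂μ
      ≤ (∫⁻ s, w s ^ q ∂μ) ^ (1 / q) * (∫⁻ s, ENNReal.ofReal ‖g s‖ ^ p ∂μ) ^ (1 / p) :=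
        ENNReal.lintegral_mul_le_Lp_mul_Lq μ hpq.symm hw hg.norm.aemeasurable.ennreal_ofReal
    _ ≤ (∫⁻ s, w s ^ q ∂μ) ^ (1 / q) * ENNReal.ofReal C := by
        rw [hnorm, ENNReal.ofReal_rpow_of_nonneg (integral_nonneg fun _ => by positivity)
          (by simpa using hpq.nonneg)]
        gcongr

theorem lintegral_Ioc_exp_mul_norm_le {p q δ C : ℝ}
    (hpq : p.HolderConjugate q) (hδ : 0 < δ) {g : ℝ → X} {a : ℝ}
    (hg : AEStronglyMeasurable g (volume.restrict (Ioc a (a + 1))))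
    (hgp : IntegrableOn (fun s => ‖g s‖ ^ p) (Ioc a (a + 1)))
    (hC : (∫ s in Ioc a (a + 1), ‖g s‖ ^ p) ^ (1 / p) ≤ C) (t : ℝ) :
    ∫⁻ s in Ioc a (a + 1), ENNReal.ofReal (exp (-δ * (t - s)) * ‖g s‖) ≤
      ENNReal.ofReal (exp (-δ * (t - a)) * ((exp (δ * q) - 1) / (δ * q)) ^ (1 / q) * C) := by
  simp_rw [ENNReal.ofReal_mul (exp_pos _).le]
  rw [ENNReal.ofReal_mul (mul_nonneg (exp_pos _).le (rpow_nonneg (exp_sub_one_div_nonneg _) _)),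
    ← lintegral_Ioc_ofReal_exp_rpow hδ hpq.symm.pos a t]
  exact lintegral_mul_ofReal_norm_le hpq (by fun_prop) hg hgp hC

theorem integral_Iic_exp_mul_norm_le {p q δ C : ℝ}
    (hpq : p.HolderConjugate q) (hδ : 0 < δ) {g : ℝ → X} (hg : AEStronglyMeasurable g volume)
    (hloc : ∀ a : ℝ, IntegrableOn (fun s => ‖g s‖ ^ p) (Ioc a (a + 1)))
    (hC : ∀ a : ℝ, (∫ s in Ioc a (a + 1), ‖g s‖ ^ p) ^ (1 / p) ≤ C) (t : ℝ) :
    ∫ s in Iic t, exp (-δ * (t - s)) * ‖g s‖ ≤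
      C * ((exp (δ * q) - 1) / (δ * q)) ^ (1 / q) / (exp δ - 1) := by
  set A := ((exp (δ * q) - 1) / (δ * q)) ^ (1 / q)
  have hA : 0 ≤ A := rpow_nonneg (exp_sub_one_div_nonneg _) _
  have hC0 : 0 ≤ C :=
    (rpow_nonneg (setIntegral_nonneg measurableSet_Ioc fun _ _ => by positivity) _).trans (hC 0)
  have hpiece : ∀ n : ℕ, ∫⁻ s in Ioc (t - (n + 1)) (t - n),
      ENNReal.ofReal (exp (-δ * (t - s)) * ‖g s‖) ≤
        ENNReal.ofReal (exp (-δ * (n + 1)) * (A * C)) := by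
    intro n
    have h := lintegral_Ioc_exp_mul_norm_le hpq hδ hg.restrict (hloc (t - (n + 1))) (hC _) t
    rwa [show t - (n + 1) + 1 = t - n by ring, sub_sub_cancel, mul_assoc] at h
  have hsum := (hasSum_exp_neg_mul_succ hδ).mul_right (A * C)
  have htsum : ∑' n : ℕ, ENNReal.ofReal (exp (-δ * (n + 1)) * (A * C)) =
      ENNReal.ofReal (C * A / (exp δ - 1)) := by
    rw [← ENNReal.ofReal_tsum_of_nonneg (fun _ => by positivity) hsum.summable, hsum.tsum_eq]
    ring_nf
  have hbound : 0 ≤ C * A / (exp δ - 1) :=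
    div_nonneg (mul_nonneg hC0 hA) (sub_nonneg.mpr (one_le_exp hδ.le))
  rw [integral_eq_lintegral_of_nonneg_ae (.of_forall fun _ => by positivity) (by fun_prop)]
  refine ENNReal.toReal_le_of_le_ofReal hbound ?_
  rw [lintegral_Iic_eq_tsum_Ioc, ← htsum]
  exact ENNReal.tsum_le_tsum hpiece

end

/-- For a Stepanov-`p`-bounded function `g` (with Stepanov bound `C`),
`∫_{-∞}^t M e^{-δ(t-s)} ‖g(s)‖ ds ≤ M C ((e^{δq}-1)/(δq))^{1/q} / (e^δ - 1)`. -/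
theorem stepanov_convolution_bound {X : Type*} [NormedAddCommGroup X]
    (p q M δ C : ℝ) (hp : 1 < p) (hpq : 1 / p + 1 / q = 1)
    (hM : 0 < M) (hδ : 0 < δ) (g : ℝ → X)
    (hmeas : AEStronglyMeasurable g (volume : Measure ℝ))
    (hloc : ∀ t : ℝ, IntegrableOn (fun s => ‖g s‖ ^ p) (Ioc t (t + 1)))
    (hC : ∀ t : ℝ, (∫ s in Ioc t (t + 1), ‖g s‖ ^ p) ^ (1 / p) ≤ C) :
    ∀ t : ℝ, (∫ s in Iic t, M * Real.exp (-δ * (t - s)) * ‖g s‖) ≤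
      M * C * ((Real.exp (δ * q) - 1) / (δ * q)) ^ (1 / q) * (1 / (Real.exp δ - 1)) := by
  intro t
  have hpq' : p.HolderConjugate q :=
    Real.holderConjugate_iff.mpr ⟨hp, by simpa only [one_div] using hpq⟩
  calc ∫ s in Iic t, M * exp (-δ * (t - s)) * ‖g s‖
      = M * ∫ s in Iic t, exp (-δ * (t - s)) * ‖g s‖ := by
        simp_rw [mul_assoc]
        exact integral_const_mul M _
    _ ≤ M * (C * ((exp (δ * q) - 1) / (δ * q)) ^ (1 / q) / (exp δ - 1)) :=
        mul_le_mul_of_nonneg_left (integral_Iic_exp_mul_norm_le hpq' hδ hmeas hloc hC t) hM.le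
    _ = _ := by ring
end

section
/- Let μ be a positive measure on the Borel σ-field of ℝ with μ(ℝ) = ∞, μ([a,b]) < ∞ for all a ≤ b, and satisfying: for all τ ∈ ℝ there exist β > 0 and a bounded interval I such that μ(A + τ) ≤ β μ(A) whenever A is Borel and A ∩ I = ∅. Then the space of μ-S^p-ergodic functions is translation invariant: if f satisfies lim_{r→∞} (1/μ([-r,r])) ∫_{[-r,r]} (∫_t^{t+1} ‖f(s)‖^p ds)^{1/p} dμ(t) = 0, then so does f(· + τ) for every τ ∈ ℝ. -/
open MeasureTheory Set Filter

/-- Hypothesis (M): for every `τ ∈ ℝ` there exist `β > 0` and a bounded interval `I`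
such that `μ(A + τ) ≤ β μ(A)` for every Borel set `A` disjoint from `I`. -/
def HypM (μ : MeasureTheory.Measure ℝ) : Prop :=
  ∀ τ : ℝ, ∃ β : ℝ, 0 < β ∧ ∃ I : Set ℝ, Bornology.IsBounded I ∧
    ∀ A : Set ℝ, MeasurableSet A → A ∩ I = ∅ →
      μ ((fun a => a + τ) '' A) ≤ ENNReal.ofReal β * μ A

/-- `f` is `μ`-`S^p`-ergodic:
`(1/μ([-r,r])) ∫_{[-r,r]} (∫_t^{t+1} ‖f(s)‖^p ds)^{1/p} dμ(t) → 0` as `r → ∞`. -/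
def SpErgodic {X : Type*} [NormedAddCommGroup X] (μ : MeasureTheory.Measure ℝ)
    (p : ℝ) (f : ℝ → X) : Prop :=
  Filter.Tendsto (fun r : ℝ => (μ (Set.Icc (-r) r)).toReal⁻¹ *
      ∫ t in Set.Icc (-r) r, (∫ s in Set.Ioc t (t + 1), ‖f s‖ ^ p) ^ (1 / p) ∂μ)
    Filter.atTop (nhds 0)

/-- `f` is `μ`-ergodic (in the classical sense):
`(1/μ([-r,r])) ∫_{[-r,r]} ‖f(t)‖ dμ(t) → 0` as `r → ∞`. -/
def ClassicalErgodic {X : Type*} [NormedAddCommGroup X] (μ : MeasureTheory.Measure ℝ)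
    (f : ℝ → X) : Prop :=
  Filter.Tendsto (fun r : ℝ => (μ (Set.Icc (-r) r)).toReal⁻¹ *
      ∫ t in Set.Icc (-r) r, ‖f t‖ ∂μ) Filter.atTop (nhds 0)

/-! Let `g t` be the local `S^p` norm of `f` on `(t, t + 1]`; then `f` is `S^p`-ergodic iff the
bounded measurable function `g` is `μ`-ergodic, and the local norm of `f (· + τ)` is `g (· + τ)`.
Hypothesis (M) at `-τ` says that the image of `μ` under `t ↦ t + τ` is at most `β μ` away from
a bounded interval, whence `∫_{[-r,r]} g (t + τ) dμ ≤ c + β ∫_{[-(r+|τ|), r+|τ|]} g dμ`.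
Hypothesis (M) at `±|τ|` bounds the two end pieces of `[-(r+|τ|), r+|τ|]` by translates of
pieces of `[-r, r]`, so `μ [-(r+|τ|), r+|τ|] ≤ K μ [-r, r]` for large `r`. Dividing by
`μ [-r, r] → ∞` gives the claim.
-/

open scoped ENNReal NNReal Topology

noncomputable def stepanovLocalNorm {X : Type*} [NormedAddCommGroup X] (p : ℝ) (f : ℝ → X)
    (t : ℝ) : ℝ :=
  (∫ s in Ioc t (t + 1), ‖f s‖ ^ p) ^ (1 / p)

section StepanovLocalNorm

variable {X : Type*} [NormedAddCommGroup X] (p : ℝ) (f : ℝ → X)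

lemma stepanovLocalNorm_nonneg (t : ℝ) : 0 ≤ stepanovLocalNorm p f t :=
  Real.rpow_nonneg (integral_nonneg fun _ => Real.rpow_nonneg (norm_nonneg _) _) _

lemma stepanovLocalNorm_comp_add_right (τ : ℝ) :
    stepanovLocalNorm p (fun s => f (s + τ)) = fun t => stepanovLocalNorm p f (t + τ) := by
  ext t
  have ht : t ≤ t + 1 := by linarith
  have htτ : t + τ ≤ t + τ + 1 := by linarith
  rw [stepanovLocalNorm, stepanovLocalNorm, ← intervalIntegral.integral_of_le ht,
    intervalIntegral.integral_comp_add_right (fun s => ‖f s‖ ^ p), add_right_comm,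
    intervalIntegral.integral_of_le htτ]

lemma measurable_stepanovLocalNorm (hf : AEStronglyMeasurable f volume) :
    Measurable (stepanovLocalNorm p f) := by
  have hfp : AEStronglyMeasurable (fun s => ‖f s‖ ^ p) volume :=
    (hf.norm.aemeasurable.pow_const p).aestronglyMeasurable
  have hband : MeasurableSet {q : ℝ × ℝ | q.1 < q.2 ∧ q.2 ≤ q.1 + 1} :=
    (measurableSet_lt measurable_fst measurable_snd).inter
      (measurableSet_le measurable_snd (measurable_fst.add_const 1))
  have hslice : ∀ t, ∫ s in Ioc t (t + 1), ‖f s‖ ^ p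
      = ∫ s, {q : ℝ × ℝ | q.1 < q.2 ∧ q.2 ≤ q.1 + 1}.indicator (hfp.mk _ ∘ Prod.snd) (t, s) := by
    intro t
    rw [integral_congr_ae (ae_restrict_of_ae hfp.ae_eq_mk), ← integral_indicator measurableSet_Ioc]
    rfl
  have hint := ((hfp.stronglyMeasurable_mk.comp_measurable measurable_snd).indicator
    hband).integral_prod_right' (ν := volume)
  have hG : Measurable fun t => ∫ s in Ioc t (t + 1), ‖f s‖ ^ p := by
    simpa only [hslice] using hint.measurable
  exact hG.pow_const _

lemma spErgodic_iff_classicalErgodic_stepanovLocalNorm (μ : Measure ℝ) :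
    SpErgodic μ p f ↔ ClassicalErgodic μ (stepanovLocalNorm p f) := by
  simp only [ClassicalErgodic, Real.norm_of_nonneg (stepanovLocalNorm_nonneg p f _)]
  rfl

end StepanovLocalNorm

section Measure

variable {μ : Measure ℝ}

lemma isLocallyFiniteMeasure_of_measure_Icc_lt_top (h : ∀ a b : ℝ, a ≤ b → μ (Icc a b) < ⊤) :
    IsLocallyFiniteMeasure μ :=
  ⟨fun x => ⟨Icc (x - 1) (x + 1), Icc_mem_nhds (by linarith) (by linarith),
    h _ _ (by linarith)⟩⟩

lemma tendsto_toReal_measure_Icc_neg_atTop [IsLocallyFiniteMeasure μ] (h : μ univ = ⊤) :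
    Tendsto (fun r : ℝ => (μ (Icc (-r) r)).toReal) atTop atTop := by
  rw [← ENNReal.tendsto_ofReal_nhds_top]
  simp only [ENNReal.ofReal_toReal measure_Icc_lt_top.ne]
  have hunion : ⋃ r : ℝ, Icc (-r) r = univ :=
    eq_univ_of_forall fun x => mem_iUnion.2 ⟨|x|, neg_abs_le x, le_abs_self x⟩
  have := tendsto_measure_iUnion_atTop (μ := μ)
    (fun r s hrs => Icc_subset_Icc (neg_le_neg hrs) hrs)
  rwa [hunion, h] at this

namespace HypM

lemma exists_Icc_measure_image_add_right_le (hμ : HypM μ) (τ : ℝ) : ∃ β : ℝ≥0, ∃ a b : ℝ,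
    ∀ A, MeasurableSet A → Disjoint A (Icc a b) → μ ((· + τ) '' A) ≤ β * μ A := by
  obtain ⟨β, -, I, hI, hβ⟩ := hμ τ
  obtain ⟨a, b, hab⟩ := bddBelow_bddAbove_iff_subset_Icc.1 ⟨hI.bddBelow, hI.bddAbove⟩
  exact ⟨β.toNNReal, a, b, fun A hA hdisj => hβ A hA (hdisj.mono_right hab).inter_eq⟩

lemma exists_measure_Icc_add_le (hμ : HypM μ) (a : ℝ) : ∃ K : ℝ≥0, ∀ᶠ r in atTop,
    μ (Icc (-(r + a)) (r + a)) ≤ K * μ (Icc (-r) r) := by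
  obtain ⟨β₁, a₁, b₁, h₁⟩ := hμ.exists_Icc_measure_image_add_right_le a
  obtain ⟨β₂, a₂, b₂, h₂⟩ := hμ.exists_Icc_measure_image_add_right_le (-a)
  refine ⟨1 + β₁ + β₂, ?_⟩
  filter_upwards [eventually_gt_atTop (b₁ + a), eventually_gt_atTop (a - a₂),
    eventually_ge_atTop a, eventually_ge_atTop 0] with r hr₁ hr₂ hra hr₀
  have hright : μ (Icc r (r + a)) ≤ β₁ * μ (Icc (-r) r) := calc
    μ (Icc r (r + a)) = μ ((· + a) '' Icc (r - a) r) := by rw [image_add_const_Icc, sub_add_cancel]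
    _ ≤ β₁ * μ (Icc (r - a) r) :=
      h₁ _ measurableSet_Icc (disjoint_left.2 fun x hx hx' => by linarith [hx.1, hx'.2])
    _ ≤ β₁ * μ (Icc (-r) r) := by gcongr; linarith
  have hleft : μ (Icc (-(r + a)) (-r)) ≤ β₂ * μ (Icc (-r) r) := calc
    μ (Icc (-(r + a)) (-r)) = μ ((· + -a) '' Icc (-r) (-r + a)) := by
      rw [image_add_const_Icc, add_neg_cancel_right, neg_add]
    _ ≤ β₂ * μ (Icc (-r) (-r + a)) :=
      h₂ _ measurableSet_Icc (disjoint_left.2 fun x hx hx' => by linarith [hx.2, hx'.1])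
    _ ≤ β₂ * μ (Icc (-r) r) := by gcongr; linarith
  have hcover : Icc (-(r + a)) (r + a) ⊆ Icc (-(r + a)) (-r) ∪ Icc (-r) r ∪ Icc r (r + a) := by
    intro x hx
    rcases le_or_gt x (-r) with h | h
    · exact Or.inl (Or.inl ⟨hx.1, h⟩)
    rcases le_or_gt x r with h' | h'
    · exact Or.inl (Or.inr ⟨h.le, h'⟩)
    · exact Or.inr ⟨h'.le, hx.2⟩
  calc μ (Icc (-(r + a)) (r + a))
      ≤ μ (Icc (-(r + a)) (-r)) + μ (Icc (-r) r) + μ (Icc r (r + a)) :=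
        (measure_mono hcover).trans <| (measure_union_le _ _).trans <|
          add_le_add_left (measure_union_le _ _) _
    _ ≤ β₂ * μ (Icc (-r) r) + μ (Icc (-r) r) + β₁ * μ (Icc (-r) r) := by gcongr
    _ = ↑(1 + β₁ + β₂) * μ (Icc (-r) r) := by push_cast; ring

lemma exists_map_add_right_le (hμ : HypM μ) (τ : ℝ) : ∃ β : ℝ≥0, ∃ a b : ℝ,
    μ.map (· + τ) ≤ (μ.map (· + τ)).restrict (Icc a b) + (β : ℝ≥0∞) • μ := by
  obtain ⟨β, a, b, h⟩ := hμ.exists_Icc_measure_image_add_right_le (-τ)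
  refine ⟨β, a, b, Measure.le_iff.2 fun s hs => ?_⟩
  have hsd : MeasurableSet (s \ Icc a b) := hs.diff measurableSet_Icc
  rw [Measure.add_apply, Measure.restrict_apply hs, Measure.smul_apply, smul_eq_mul]
  calc μ.map (· + τ) s ≤ μ.map (· + τ) (s ∩ Icc a b) + μ.map (· + τ) (s \ Icc a b) :=
        measure_le_inter_add_sdiff _ _ _
    _ ≤ μ.map (· + τ) (s ∩ Icc a b) + β * μ s := by
      gcongr
      rw [Measure.map_apply (measurable_add_const τ) hsd, ← neg_neg τ, ← image_add_right]
      exact (h _ hsd disjoint_sdiff_left).trans (by gcongr; exact sdiff_subset)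

lemma exists_lintegral_comp_add_right_le (hμ : HypM μ) (τ : ℝ) : ∃ β : ℝ≥0, ∃ a b : ℝ,
    ∀ (h : ℝ → ℝ≥0∞) (r : ℝ), ∫⁻ t in Icc (-r) r, h (t + τ) ∂μ ≤
      ∫⁻ x in Icc a b, h x ∂(μ.map (· + τ)) + β * ∫⁻ x in Icc (-(r + |τ|)) (r + |τ|), h x ∂μ := by
  obtain ⟨β, a, b, hle⟩ := hμ.exists_map_add_right_le τ
  refine ⟨β, a, b, fun h r => ?_⟩
  set R := r + |τ|
  have hsub : Icc (-r) r ⊆ (· + τ) ⁻¹' Icc (-R) R := fun t ht =>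
    ⟨by linarith [ht.1, neg_abs_le τ], by linarith [ht.2, le_abs_self τ]⟩
  calc ∫⁻ t in Icc (-r) r, h (t + τ) ∂μ ≤ ∫⁻ t in (· + τ) ⁻¹' Icc (-R) R, h (t + τ) ∂μ :=
        lintegral_mono_set hsub
    _ = ∫⁻ x in Icc (-R) R, h x ∂(μ.map (· + τ)) :=
        ((measurable_add_const τ).measurePreserving μ).setLIntegral_comp_preimage_emb
          (measurableEmbedding_addRight τ) h _
    _ ≤ ∫⁻ x in Icc (-R) R, h x ∂((μ.map (· + τ)).restrict (Icc a b) + (β : ℝ≥0∞) • μ) :=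
        lintegral_mono' (Measure.restrict_mono le_rfl hle) le_rfl
    _ = ∫⁻ x in Icc (-R) R, h x ∂((μ.map (· + τ)).restrict (Icc a b))
          + β * ∫⁻ x in Icc (-R) R, h x ∂μ := by
        rw [Measure.restrict_add, lintegral_add_measure, Measure.restrict_smul,
          lintegral_smul_measure, smul_eq_mul]
    _ ≤ ∫⁻ x in Icc a b, h x ∂(μ.map (· + τ)) + β * ∫⁻ x in Icc (-R) R, h x ∂μ :=
        add_le_add_left (lintegral_mono' Measure.restrict_le_self le_rfl) _

end HypM

end Measure

section Ergodic

variable {X : Type*} [NormedAddCommGroup X]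

noncomputable def normAverage (μ : Measure ℝ) (g : ℝ → X) (r : ℝ) : ℝ :=
  (μ (Icc (-r) r)).toReal⁻¹ * ∫ t in Icc (-r) r, ‖g t‖ ∂μ

lemma classicalErgodic_iff_tendsto_normAverage (μ : Measure ℝ) (g : ℝ → X) :
    ClassicalErgodic μ g ↔ Tendsto (normAverage μ g) atTop (𝓝 0) :=
  Iff.rfl

lemma normAverage_nonneg (μ : Measure ℝ) (g : ℝ → X) (r : ℝ) : 0 ≤ normAverage μ g r :=
  mul_nonneg (inv_nonneg.2 ENNReal.toReal_nonneg) (integral_nonneg fun _ => norm_nonneg _)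

variable {μ : Measure ℝ} [IsLocallyFiniteMeasure μ] {g : ℝ → X} {C : ℝ}

lemma HypM.exists_integral_norm_comp_add_right_le (hμ : HypM μ) (hg : StronglyMeasurable g)
    (hC : ∀ t, ‖g t‖ ≤ C) (τ : ℝ) : ∃ c : ℝ, ∃ β : ℝ≥0, ∀ r,
      ∫ t in Icc (-r) r, ‖g (t + τ)‖ ∂μ ≤
        c + β * ∫ t in Icc (-(r + |τ|)) (r + |τ|), ‖g t‖ ∂μ := by
  obtain ⟨β, a, b, hle⟩ := hμ.exists_lintegral_comp_add_right_le τ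
  have hfin : ∀ (ν : Measure ℝ) (s : Set ℝ), ν s ≠ ⊤ → ∫⁻ x in s, ‖g x‖ₑ ∂ν ≠ ⊤ :=
    fun ν s hs => (setLIntegral_lt_top_of_le_nnreal hs ⟨C.toNNReal, fun x _ => by
      rw [← ofReal_norm]; exact ENNReal.ofReal_le_ofReal (hC x)⟩).ne
  have hν : μ.map (· + τ) (Icc a b) ≠ ⊤ := by
    rw [Measure.map_apply (measurable_add_const τ) measurableSet_Icc, preimage_add_const_Icc]
    exact measure_Icc_lt_top.ne
  refine ⟨(∫⁻ x in Icc a b, ‖g x‖ₑ ∂(μ.map (· + τ))).toReal, β, fun r => ?_⟩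
  have hc := hfin _ _ hν
  have hR := hfin μ (Icc (-(r + |τ|)) (r + |τ|)) measure_Icc_lt_top.ne
  rw [integral_norm_eq_lintegral_enorm (f := fun t => g (t + τ))
      (hg.comp_measurable (measurable_add_const τ)).aestronglyMeasurable.restrict,
    integral_norm_eq_lintegral_enorm hg.aestronglyMeasurable.restrict, ← ENNReal.coe_toReal,
    ← ENNReal.toReal_mul, ← ENNReal.toReal_add hc (by finiteness)]
  exact ENNReal.toReal_mono (by finiteness) (hle (‖g ·‖ₑ) r)

lemma HypM.exists_eventually_normAverage_comp_add_right_le (hM : HypM μ) (hμ : μ univ = ⊤)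
    (hg : StronglyMeasurable g) (hC : ∀ t, ‖g t‖ ≤ C) (τ : ℝ) : ∃ c κ : ℝ, ∀ᶠ r in atTop,
      normAverage μ (fun t => g (t + τ)) r ≤
        c * (μ (Icc (-r) r)).toReal⁻¹ + κ * normAverage μ g (r + |τ|) := by
  obtain ⟨c, β, hint⟩ := hM.exists_integral_norm_comp_add_right_le hg hC τ
  obtain ⟨K, hK⟩ := hM.exists_measure_Icc_add_le |τ|
  have hm := tendsto_toReal_measure_Icc_neg_atTop hμ
  have hshift : Tendsto (fun r : ℝ => r + |τ|) atTop atTop :=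
    tendsto_atTop_add_const_right _ _ tendsto_id
  refine ⟨c, β * K, ?_⟩
  filter_upwards [hK, hm.eventually_gt_atTop 0, hshift.eventually (hm.eventually_gt_atTop 0)]
    with r hKr hr hR
  set m := (μ (Icc (-r) r)).toReal
  set mR := (μ (Icc (-(r + |τ|)) (r + |τ|))).toReal
  have hmR : mR ≤ K * m := by
    have := ENNReal.toReal_mono (ENNReal.mul_ne_top ENNReal.coe_ne_top measure_Icc_lt_top.ne) hKr
    rwa [ENNReal.toReal_mul, ENNReal.coe_toReal] at this
  have hIR : ∫ t in Icc (-(r + |τ|)) (r + |τ|), ‖g t‖ ∂μ = mR * normAverage μ g (r + |τ|) := by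
    rw [normAverage, ← mul_assoc, mul_inv_cancel₀ hR.ne', one_mul]
  calc normAverage μ (fun t => g (t + τ)) r
      ≤ m⁻¹ * (c + β * (mR * normAverage μ g (r + |τ|))) := by
        rw [normAverage, ← hIR]; gcongr; exact hint r
    _ = c * m⁻¹ + β * (mR / m) * normAverage μ g (r + |τ|) := by ring
    _ ≤ c * m⁻¹ + β * K * normAverage μ g (r + |τ|) := by
        gcongr
        · exact normAverage_nonneg ..
        · rwa [div_le_iff₀ hr]

theorem ClassicalErgodic.comp_add_right (herg : ClassicalErgodic μ g) (hM : HypM μ)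
    (hμ : μ univ = ⊤) (hg : StronglyMeasurable g) (hC : ∀ t, ‖g t‖ ≤ C) (τ : ℝ) :
    ClassicalErgodic μ (fun t => g (t + τ)) := by
  obtain ⟨c, κ, hle⟩ := hM.exists_eventually_normAverage_comp_add_right_le hμ hg hC τ
  rw [classicalErgodic_iff_tendsto_normAverage] at herg ⊢
  have hbound : Tendsto (fun r => c * (μ (Icc (-r) r)).toReal⁻¹ + κ * normAverage μ g (r + |τ|))
      atTop (𝓝 0) := by
    have hshift : Tendsto (fun r : ℝ => r + |τ|) atTop atTop :=
      tendsto_atTop_add_const_right _ _ tendsto_id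
    simpa using ((tendsto_inv_atTop_zero.comp (tendsto_toReal_measure_Icc_neg_atTop hμ)).const_mul
      c).add ((herg.comp hshift).const_mul κ)
  exact tendsto_of_tendsto_of_tendsto_of_le_of_le' tendsto_const_nhds hbound
    (Eventually.of_forall (normAverage_nonneg μ _)) hle

end Ergodic

theorem spErgodic_translation_invariant_general {X : Type*} [NormedAddCommGroup X]
    (p : ℝ) (μ : Measure ℝ) (hμ1 : μ Set.univ = ⊤)
    (hμ2 : ∀ a b : ℝ, a ≤ b → μ (Icc a b) < ⊤) (hμM : HypM μ)
    (f : ℝ → X) (hmeas : AEStronglyMeasurable f (volume : Measure ℝ))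
    (C : ℝ) (hC : ∀ t : ℝ, (∫ s in Ioc t (t + 1), ‖f s‖ ^ p) ^ (1 / p) ≤ C)
    (herg : SpErgodic μ p f) :
    ∀ τ : ℝ, SpErgodic μ p (fun t => f (t + τ)) := by
  intro τ
  have := isLocallyFiniteMeasure_of_measure_Icc_lt_top hμ2
  have hbound (t : ℝ) : ‖stepanovLocalNorm p f t‖ ≤ C := by
    rw [Real.norm_of_nonneg (stepanovLocalNorm_nonneg p f t)]
    exact hC t
  rw [spErgodic_iff_classicalErgodic_stepanovLocalNorm] at herg ⊢
  rw [stepanovLocalNorm_comp_add_right]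
  exact herg.comp_add_right hμM hμ1 (measurable_stepanovLocalNorm p f hmeas).stronglyMeasurable
    hbound τ

/-- under hypothesis (M), the space of `μ`-`S^p`-ergodic functions is
translation invariant. -/
theorem spErgodic_translation_invariant {X : Type*} [NormedAddCommGroup X]
    (p : ℝ) (hp : 1 ≤ p) (μ : Measure ℝ) (hμ1 : μ Set.univ = ⊤)
    (hμ2 : ∀ a b : ℝ, a ≤ b → μ (Icc a b) < ⊤) (hμM : HypM μ)
    (f : ℝ → X) (hmeas : AEStronglyMeasurable f (volume : Measure ℝ))
    (C : ℝ) (hC : ∀ t : ℝ, (∫ s in Ioc t (t + 1), ‖f s‖ ^ p) ^ (1 / p) ≤ C)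
    (herg : SpErgodic μ p f) :
    ∀ τ : ℝ, SpErgodic μ p (fun t => f (t + τ)) :=
  spErgodic_translation_invariant_general p μ hμ1 hμ2 hμM f hmeas C hC herg
end

section
/- Let μ be a positive Borel measure on ℝ with μ(ℝ) = ∞, finite on compact intervals, satisfying hypothesis (M). Every μ-ergodic bounded continuous function is μ-S^p-ergodic: if f ∈ BC(ℝ, X) satisfies lim_{r→∞} (1/μ([-r,r])) ∫_{[-r,r]} ‖f(t)‖ dμ(t) = 0, then lim_{r→∞} (1/μ([-r,r])) ∫_{[-r,r]} (∫_t^{t+1} ‖f(s)‖^p ds)^{1/p} dμ(t) = 0 for every 1 ≤ p < ∞. -/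
open MeasureTheory Set Filter

open Asymptotics Topology
open scoped NNReal

/-!
Hypothesis (M) says that translating `μ` by `τ` multiplies it by at most a constant away from a
bounded set. Hence, for bounded nonnegative continuous `g`, the integral of `g (· + τ)` over
`[-r, r]` is at most `β` times the integral of `g` over `[-(r + |τ|), r + |τ|]` plus a constant,
and (taking `g = 1`) `μ [-(r + T), r + T] = O(μ [-r, r])`; since `μ [-r, r] → ∞`, every
translate of an ergodic `g` is ergodic. Averaging over `τ ∈ (0, 1]` (Fubini and dominated
convergence) makes `t ↦ ∫_t^{t+1} ‖f‖` ergodic. Finally, if `‖f‖ ≤ C` then the window norm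
`F t = (∫_t^{t+1} ‖f‖^p)^{1/p}` satisfies `F ≤ C` and `F^p ≤ C^{p-1} ∫_t^{t+1} ‖f‖`, so
`F ≤ ε + K_ε ∫_t^{t+1} ‖f‖` for every `ε > 0`.
-/

/-- `ClassicalErgodic μ f` and `SpErgodic μ p f` unfold to `symmMean μ _ → 0`. -/
noncomputable def symmMean (μ : Measure ℝ) (h : ℝ → ℝ) (r : ℝ) : ℝ :=
  (μ.real (Icc (-r) r))⁻¹ * ∫ t in Icc (-r) r, h t ∂μ

theorem isFiniteMeasureOnCompacts_of_measure_Icc_lt_top {μ : Measure ℝ}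
    (h : ∀ a b : ℝ, a ≤ b → μ (Icc a b) < ⊤) : IsFiniteMeasureOnCompacts μ where
  lt_top_of_isCompact K hK := (measure_mono hK.isBounded.subset_Icc_sInf_sSup).trans_lt
    (h _ _ (Real.sInf_le_sSup K hK.bddBelow hK.bddAbove))

theorem rpow_le_rpow_sub_one_mul {x C p : ℝ} (hx : 0 ≤ x) (hxC : x ≤ C) (hp : 1 ≤ p) :
    x ^ p ≤ C ^ (p - 1) * x := by
  calc x ^ p = x ^ (p - 1) * x ^ (1 : ℝ) := by
        rw [← Real.rpow_add' hx (by linarith), sub_add_cancel]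
    _ ≤ C ^ (p - 1) * x := by
        rw [Real.rpow_one]
        gcongr

theorem le_add_div_rpow_mul_of_rpow_le {x y C p ε : ℝ} (hx : 0 ≤ x) (hxC : x ≤ C) (hp : 0 < p)
    (hε : 0 < ε) (hxy : x ^ p ≤ y) : x ≤ ε + C / ε ^ p * y := by
  have hy : 0 ≤ y := (Real.rpow_nonneg hx p).trans hxy
  have hC : 0 ≤ C := hx.trans hxC
  rcases le_or_gt x ε with hxε | hεx
  · have : 0 ≤ C / ε ^ p * y := by positivity
    linarith
  · have hεy : ε ^ p ≤ y := (Real.rpow_lt_rpow hε.le hεx hp).le.trans hxy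
    have hεp : 0 < ε ^ p := by positivity
    calc x ≤ C / ε ^ p * ε ^ p := by rwa [div_mul_cancel₀ _ hεp.ne']
      _ ≤ ε + C / ε ^ p * y := by
        have : C / ε ^ p * ε ^ p ≤ C / ε ^ p * y := by gcongr
        linarith

theorem setIntegral_Ioc_add_one_eq (g : ℝ → ℝ) (t : ℝ) :
    ∫ s in Ioc t (t + 1), g s = ∫ s in Ioc 0 1, g (t + s) := by
  rw [← intervalIntegral.integral_of_le (by linarith),
    ← intervalIntegral.integral_of_le zero_le_one, intervalIntegral.integral_comp_add_left, add_zero]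

theorem continuous_setIntegral_Ioc_add_one {g : ℝ → ℝ} (hg : Continuous g) :
    Continuous fun t => ∫ s in Ioc t (t + 1), g s := by
  simp_rw [setIntegral_Ioc_add_one_eq, ← intervalIntegral.integral_of_le zero_le_one]
  exact intervalIntegral.continuous_parametric_intervalIntegral_of_continuous'
    (f := fun t s => g (t + s)) (hg.comp continuous_add) 0 1

theorem setIntegral_Ioc_add_one_le {g : ℝ → ℝ} (hg : Continuous g) {C : ℝ} (hgC : ∀ s, g s ≤ C)
    (t : ℝ) : ∫ s in Ioc t (t + 1), g s ≤ C := by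
  calc ∫ s in Ioc t (t + 1), g s ≤ ∫ s in Ioc t (t + 1), C :=
        setIntegral_mono_on hg.integrableOn_Ioc continuous_const.integrableOn_Ioc measurableSet_Ioc
          fun s _ => hgC s
    _ = C := by simp [Real.volume_real_Ioc]

theorem rpow_setIntegral_Ioc_add_one_le_add_mul {g : ℝ → ℝ} (hg : Continuous g)
    (hg0 : ∀ s, 0 ≤ g s) {C : ℝ} (hgC : ∀ s, g s ≤ C) {p ε : ℝ} (hp : 1 ≤ p) (hε : 0 < ε)
    (t : ℝ) :
    (∫ s in Ioc t (t + 1), g s ^ p) ^ (1 / p) ≤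
      ε + C / ε ^ p * C ^ (p - 1) * ∫ s in Ioc t (t + 1), g s := by
  have hp0 : 0 < p := by linarith
  have hC : 0 ≤ C := (hg0 0).trans (hgC 0)
  have hpow : ∫ s in Ioc t (t + 1), g s ^ p ≤ C ^ (p - 1) * ∫ s in Ioc t (t + 1), g s := by
    rw [← integral_const_mul]
    exact setIntegral_mono_on (hg.rpow_const fun _ => Or.inr hp0.le).integrableOn_Ioc
      (hg.const_mul _).integrableOn_Ioc measurableSet_Ioc
      fun s _ => rpow_le_rpow_sub_one_mul (hg0 s) (hgC s) hp
  have hint0 : 0 ≤ ∫ s in Ioc t (t + 1), g s ^ p :=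
    setIntegral_nonneg measurableSet_Ioc fun s _ => Real.rpow_nonneg (hg0 s) p
  have hxp : ((∫ s in Ioc t (t + 1), g s ^ p) ^ (1 / p)) ^ p = ∫ s in Ioc t (t + 1), g s ^ p := by
    rw [one_div, Real.rpow_inv_rpow hint0 hp0.ne']
  set x := (∫ s in Ioc t (t + 1), g s ^ p) ^ (1 / p)
  have hx : 0 ≤ x := Real.rpow_nonneg hint0 _
  have hxC : x ≤ C := by
    rw [← Real.rpow_le_rpow_iff hx hC hp0, hxp]
    calc _ ≤ C ^ (p - 1) * ∫ s in Ioc t (t + 1), g s := hpow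
      _ ≤ C ^ (p - 1) * C ^ (1 : ℝ) := by
        rw [Real.rpow_one]
        gcongr
        exact setIntegral_Ioc_add_one_le hg hgC t
      _ = C ^ p := by rw [← Real.rpow_add' hC (by linarith), sub_add_cancel]
  rw [mul_assoc]
  exact le_add_div_rpow_mul_of_rpow_le hx hxC hp0 hε (hxp ▸ hpow)

section Means

variable {μ : Measure ℝ} [IsFiniteMeasureOnCompacts μ]

theorem norm_symmMean_le {h : ℝ → ℝ} {C : ℝ} (hC : ∀ t, ‖h t‖ ≤ C) (r : ℝ) :
    ‖symmMean μ h r‖ ≤ C := by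
  have hC0 : 0 ≤ C := (norm_nonneg _).trans (hC 0)
  rw [symmMean, norm_mul, norm_inv, Real.norm_of_nonneg measureReal_nonneg]
  calc (μ.real (Icc (-r) r))⁻¹ * ‖∫ t in Icc (-r) r, h t ∂μ‖
      ≤ (μ.real (Icc (-r) r))⁻¹ * (C * μ.real (Icc (-r) r)) := by
        gcongr
        exact norm_setIntegral_le_of_norm_le_const measure_Icc_lt_top fun t _ => hC t
    _ = C * ((μ.real (Icc (-r) r))⁻¹ * μ.real (Icc (-r) r)) := by ring
    _ ≤ C := mul_le_of_le_one_right hC0 inv_mul_le_one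

theorem tendsto_symmMean_zero_iff_isLittleO {h : ℝ → ℝ} :
    Tendsto (symmMean μ h) atTop (𝓝 0) ↔
      (fun r => ∫ t in Icc (-r) r, h t ∂μ) =o[atTop] fun r => μ.real (Icc (-r) r) := by
  rw [isLittleO_iff_tendsto fun r hr => ?_]
  · simp only [div_eq_inv_mul]
    rfl
  · rw [measureReal_eq_zero_iff measure_Icc_lt_top.ne, ← Measure.restrict_eq_zero] at hr
    rw [hr, integral_zero_measure]

theorem tendsto_measureReal_Icc_atTop (hμ : μ univ = ⊤) :
    Tendsto (fun r => μ.real (Icc (-r) r)) atTop atTop := by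
  have hmono : Monotone fun r : ℝ => Icc (-r) r := fun r r' h => Icc_subset_Icc (by linarith) h
  have hunion : (⋃ r : ℝ, Icc (-r) r) = univ :=
    eq_univ_of_forall fun x => mem_iUnion.2 ⟨|x|, abs_le.1 le_rfl⟩
  have hlim := tendsto_measure_iUnion_atTop (μ := μ) hmono
  rw [hunion, hμ] at hlim
  refine tendsto_atTop.2 fun b => ?_
  filter_upwards [hlim.eventually (lt_mem_nhds (ENNReal.ofReal_lt_top (r := b)))] with r hr
  exact (ENNReal.ofReal_le_iff_le_toReal measure_Icc_lt_top.ne).1 hr.le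

theorem tendsto_symmMean_zero_of_forall_le_add_mul {F G : ℝ → ℝ} (hF : Continuous F)
    (hG : Continuous G) (hF0 : ∀ t, 0 ≤ F t) (hFG : ∀ ε > 0, ∃ K, ∀ t, F t ≤ ε + K * G t)
    (hGlim : Tendsto (symmMean μ G) atTop (𝓝 0)) : Tendsto (symmMean μ F) atTop (𝓝 0) := by
  have hmean : ∀ ε K, 0 ≤ ε → (∀ t, F t ≤ ε + K * G t) →
      ∀ r, symmMean μ F r ≤ ε + K * symmMean μ G r := by
    intro ε K hε hle r
    have hint : ∫ t in Icc (-r) r, F t ∂μ ≤ ∫ t in Icc (-r) r, ε + K * G t ∂μ :=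
      setIntegral_mono_on hF.integrableOn_Icc
        (continuous_const.add (hG.const_mul K)).integrableOn_Icc measurableSet_Icc fun t _ => hle t
    rw [integral_add continuous_const.integrableOn_Icc (hG.const_mul K).integrableOn_Icc,
      setIntegral_const, integral_const_mul, smul_eq_mul] at hint
    calc symmMean μ F r ≤ (μ.real (Icc (-r) r))⁻¹ *
          (μ.real (Icc (-r) r) * ε + K * ∫ t in Icc (-r) r, G t ∂μ) := by
          unfold symmMean; gcongr
      _ = ε * ((μ.real (Icc (-r) r))⁻¹ * μ.real (Icc (-r) r)) + K * symmMean μ G r := by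
          unfold symmMean; ring
      _ ≤ ε + K * symmMean μ G r := by
          gcongr
          exact mul_le_of_le_one_right hε inv_mul_le_one
  refine tendsto_order.2 ⟨fun a ha => Eventually.of_forall fun r => ha.trans_le ?_, fun a ha => ?_⟩
  · exact mul_nonneg (inv_nonneg.2 measureReal_nonneg)
      (setIntegral_nonneg measurableSet_Icc fun t _ => hF0 t)
  · obtain ⟨K, hK⟩ := hFG (a / 2) (half_pos ha)
    have hKlim : Tendsto (fun r => K * symmMean μ G r) atTop (𝓝 0) := by
      simpa using hGlim.const_mul K
    filter_upwards [hKlim.eventually (gt_mem_nhds (half_pos ha))] with r hr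
    linarith [hmean _ _ (half_pos ha).le hK r]

theorem tendsto_symmMean_setIntegral_Ioc_add_one {g : ℝ → ℝ} (hg : Continuous g) {C : ℝ}
    (hgC : ∀ t, ‖g t‖ ≤ C) (hlim : ∀ τ, Tendsto (symmMean μ fun t => g (t + τ)) atTop (𝓝 0)) :
    Tendsto (symmMean μ fun t => ∫ s in Ioc t (t + 1), g s) atTop (𝓝 0) := by
  have hint : ∀ r, Integrable (Function.uncurry fun t s => g (t + s))
      ((μ.restrict (Icc (-r) r)).prod (volume.restrict (Ioc (0 : ℝ) 1))) := fun r => by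
    have := isFiniteMeasure_restrict.2 (measure_Icc_lt_top (μ := μ) (a := -r) (b := r)).ne
    exact (integrable_const C).mono' (hg.comp continuous_add).aestronglyMeasurable
      (ae_of_all _ fun _ => hgC _)
  have hswap : ∀ r, symmMean μ (fun t => ∫ s in Ioc t (t + 1), g s) r =
      ∫ s in Ioc 0 1, symmMean μ (fun t => g (t + s)) r := fun r => by
    simp only [symmMean, setIntegral_Ioc_add_one_eq, integral_const_mul]
    rw [integral_integral_swap (hint r)]
  have hmeas : ∀ r, AEStronglyMeasurable (fun s => symmMean μ (fun t => g (t + s)) r)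
      (volume.restrict (Ioc 0 1)) := fun r =>
    ((hint r).integral_prod_right.const_mul _).aestronglyMeasurable
  have hdom := tendsto_integral_filter_of_dominated_convergence (fun _ => C)
    (Eventually.of_forall hmeas)
    (Eventually.of_forall fun r => ae_of_all _ fun _ => norm_symmMean_le (fun _ => hgC _) r)
    (integrable_const C) (ae_of_all _ hlim)
  rw [funext hswap]
  simpa using hdom

namespace HypM

variable {μ : Measure ℝ} [IsFiniteMeasureOnCompacts μ]

theorem exists_map_add_le (hμ : HypM μ) (τ : ℝ) :
    ∃ β : ℝ≥0, ∃ ν : Measure ℝ, IsFiniteMeasure ν ∧ μ.map (· + τ) ≤ β • μ + ν := by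
  obtain ⟨β, -, I, hI, hβ⟩ := hμ (-τ)
  have hK : MeasurableSet (Icc (sInf I) (sSup I)) := measurableSet_Icc
  refine ⟨β.toNNReal, (μ.map (· + τ)).restrict (Icc (sInf I) (sSup I)),
    isFiniteMeasure_restrict.2 ?_, Measure.le_iff.2 fun s hs => ?_⟩
  · rw [Measure.map_apply (measurable_add_const τ) hK, preimage_add_const_Icc]
    exact measure_Icc_lt_top.ne
  have hdiff : (μ.map (· + τ)) (s \ Icc (sInf I) (sSup I)) ≤ β.toNNReal * μ s := by
    rw [Measure.map_apply (measurable_add_const τ) (hs.diff hK), ← neg_neg τ, ← image_add_right]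
    refine (hβ _ (hs.diff hK) ?_).trans
      (mul_le_mul_of_nonneg_left (measure_mono sdiff_subset) zero_le)
    exact disjoint_iff_inter_eq_empty.1 (disjoint_sdiff_left.mono_right hI.subset_Icc_sInf_sSup)
  calc (μ.map (· + τ)) s
      ≤ (μ.map (· + τ)) (s ∩ Icc (sInf I) (sSup I)) +
          (μ.map (· + τ)) (s \ Icc (sInf I) (sSup I)) := measure_le_inter_add_sdiff _ _ _
    _ ≤ (β.toNNReal • μ + (μ.map (· + τ)).restrict (Icc (sInf I) (sSup I))) s := by
      rw [Measure.add_apply, Measure.restrict_apply hs, add_comm, Measure.smul_apply,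
        ENNReal.smul_def, smul_eq_mul]
      gcongr

theorem exists_setIntegral_comp_add_le (hμ : HypM μ) {g : ℝ → ℝ} (hg : Continuous g)
    (hg0 : ∀ t, 0 ≤ g t) {C : ℝ} (hgC : ∀ t, g t ≤ C) (τ : ℝ) :
    ∃ β D : ℝ, ∀ a b : ℝ,
      ∫ t in Icc (a - τ) (b - τ), g (t + τ) ∂μ ≤ β * ∫ t in Icc a b, g t ∂μ + D := by
  obtain ⟨β, ν, hν, hle⟩ := hμ.exists_map_add_le τ
  refine ⟨β, C * ν.real univ, fun a b => ?_⟩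
  have hνint : Integrable g (ν.restrict (Icc a b)) :=
    (integrable_const C).mono' hg.aestronglyMeasurable
      (ae_of_all _ fun t => (Real.norm_of_nonneg (hg0 t)).trans_le (hgC t))
  have hμint : Integrable g ((β • μ).restrict (Icc a b)) := by
    rw [Measure.restrict_smul]
    exact hg.integrableOn_Icc.smul_measure_nnreal
  have hνbound : ∫ t in Icc a b, g t ∂ν ≤ C * ν.real univ :=
    calc ∫ t in Icc a b, g t ∂ν ≤ ∫ _ in Icc a b, C ∂ν :=
          integral_mono hνint (integrable_const C) hgC
      _ = ν.real (Icc a b) * C := by rw [setIntegral_const, smul_eq_mul]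
      _ ≤ C * ν.real univ := by
        rw [mul_comm]
        gcongr
        · exact (hg0 0).trans (hgC 0)
        · exact measure_ne_top ν univ
        · exact subset_univ _
  calc ∫ t in Icc (a - τ) (b - τ), g (t + τ) ∂μ = ∫ t in Icc a b, g t ∂(μ.map (· + τ)) := by
        rw [(measurableEmbedding_addRight τ).restrict_map, preimage_add_const_Icc,
          (measurableEmbedding_addRight τ).integral_map]
    _ ≤ ∫ t in Icc a b, g t ∂(β • μ + ν) :=
        integral_mono_measure (Measure.restrict_mono le_rfl hle) (ae_of_all _ hg0)
          (by rw [Measure.restrict_add]; exact hμint.add_measure hνint)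
    _ = β * ∫ t in Icc a b, g t ∂μ + ∫ t in Icc a b, g t ∂ν := by
        rw [Measure.restrict_add, integral_add_measure hμint hνint, Measure.restrict_smul,
          integral_smul_nnreal_measure, NNReal.smul_def, smul_eq_mul]
    _ ≤ β * ∫ t in Icc a b, g t ∂μ + C * ν.real univ := by gcongr

theorem isBigO_measureReal_Icc_add (hμ : HypM μ) (hμ_top : μ univ = ⊤) (T : ℝ) :
    (fun r => μ.real (Icc (-(r + T)) (r + T))) =O[atTop] fun r => μ.real (Icc (-r) r) := by
  obtain ⟨β₁, D₁, h₁⟩ := hμ.exists_setIntegral_comp_add_le (g := fun _ => 1) continuous_const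
    (fun _ => zero_le_one) (fun _ => le_rfl) T
  obtain ⟨β₂, D₂, h₂⟩ := hμ.exists_setIntegral_comp_add_le (g := fun _ => 1) continuous_const
    (fun _ => zero_le_one) (fun _ => le_rfl) (-T)
  have hbound : ∀ r, T ≤ r → μ.real (Icc (-(r + T)) (r + T)) ≤
      (β₁ + β₂) * μ.real (Icc (-r) r) + (D₁ + D₂) := by
    intro r hr
    have hleft := h₁ (-r) r
    have hright := h₂ (-r) r
    simp only [setIntegral_const, smul_eq_mul, mul_one, sub_neg_eq_add] at hleft hright
    have hcover : Icc (-(r + T)) (r + T) ⊆ Icc (-r - T) (r - T) ∪ Icc (-r + T) (r + T) := by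
      intro x hx
      rcases le_or_gt x (r - T) with h | h
      · exact Or.inl ⟨by linarith [hx.1], h⟩
      · exact Or.inr ⟨by linarith, hx.2⟩
    calc μ.real (Icc (-(r + T)) (r + T))
        ≤ μ.real (Icc (-r - T) (r - T) ∪ Icc (-r + T) (r + T)) :=
          measureReal_mono hcover (measure_union_lt_top measure_Icc_lt_top measure_Icc_lt_top).ne
      _ ≤ μ.real (Icc (-r - T) (r - T)) + μ.real (Icc (-r + T) (r + T)) :=
          measureReal_union_le _ _
      _ ≤ (β₁ + β₂) * μ.real (Icc (-r) r) + (D₁ + D₂) := by linarith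
  have hm := tendsto_norm_atTop_atTop.comp (tendsto_measureReal_Icc_atTop hμ_top)
  have hRHS : (fun r => (β₁ + β₂) * μ.real (Icc (-r) r) + (D₁ + D₂)) =O[atTop]
      fun r => μ.real (Icc (-r) r) :=
    ((isBigO_refl _ _).const_mul_left _).add
      (isLittleO_const_left.2 (Or.inr hm)).isBigO
  refine (IsBigO.of_norm_eventuallyLE ?_).trans hRHS
  filter_upwards [eventually_ge_atTop T] with r hr
  rw [Real.norm_of_nonneg measureReal_nonneg]
  exact hbound r hr

theorem tendsto_symmMean_comp_add (hμ : HypM μ) (hμ_top : μ univ = ⊤) {g : ℝ → ℝ}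
    (hg : Continuous g) (hg0 : ∀ t, 0 ≤ g t) {C : ℝ} (hgC : ∀ t, g t ≤ C)
    (herg : Tendsto (symmMean μ g) atTop (𝓝 0)) (τ : ℝ) :
    Tendsto (symmMean μ fun t => g (t + τ)) atTop (𝓝 0) := by
  rw [tendsto_symmMean_zero_iff_isLittleO] at herg ⊢
  obtain ⟨β, D, hβD⟩ := hμ.exists_setIntegral_comp_add_le hg hg0 hgC τ
  have hshift : ∀ r, ∫ t in Icc (-r) r, g (t + τ) ∂μ ≤
      β * ∫ t in Icc (-(r + |τ|)) (r + |τ|), g t ∂μ + D := fun r =>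
    (setIntegral_mono_set (hg.comp (continuous_add_const τ)).integrableOn_Icc
      (ae_of_all _ fun t => hg0 _) (Icc_subset_Icc (by linarith [neg_abs_le τ])
        (by linarith [le_abs_self τ])).eventuallyLE).trans (hβD _ _)
  have hwide : (fun r => ∫ t in Icc (-(r + |τ|)) (r + |τ|), g t ∂μ) =o[atTop]
      fun r => μ.real (Icc (-r) r) :=
    (herg.comp_tendsto (tendsto_atTop_add_const_right _ |τ| tendsto_id)).trans_isBigO
      (hμ.isBigO_measureReal_Icc_add hμ_top |τ|)
  have hD : (fun _ => D) =o[atTop] fun r => μ.real (Icc (-r) r) :=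
    isLittleO_const_left.2
      (Or.inr (tendsto_norm_atTop_atTop.comp (tendsto_measureReal_Icc_atTop hμ_top)))
  refine (IsBigO.of_norm_eventuallyLE (Eventually.of_forall fun r => ?_)).trans_isLittleO
    ((hwide.const_mul_left β).add hD)
  exact (Real.norm_of_nonneg (setIntegral_nonneg measurableSet_Icc fun t _ => hg0 _)).trans_le
    (hshift r)

end HypM

/-- under hypothesis (M), every `μ`-ergodic bounded continuous function is
`μ`-`S^p`-ergodic for every `1 ≤ p < ∞`. -/
theorem classicalErgodic_spErgodic {X : Type*} [NormedAddCommGroup X]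
    (μ : Measure ℝ) (hμ1 : μ Set.univ = ⊤)
    (hμ2 : ∀ a b : ℝ, a ≤ b → μ (Icc a b) < ⊤) (hμM : HypM μ)
    (f : ℝ → X) (hcont : Continuous f) (hbdd : ∃ C : ℝ, ∀ t : ℝ, ‖f t‖ ≤ C)
    (herg : ClassicalErgodic μ f) :
    ∀ p : ℝ, 1 ≤ p → SpErgodic μ p f := by
  intro p hp
  have := isFiniteMeasureOnCompacts_of_measure_Icc_lt_top hμ2
  obtain ⟨C, hC⟩ := hbdd
  have hg : Continuous fun t => ‖f t‖ := hcont.norm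
  have hwindow : Tendsto (symmMean μ fun t => ∫ s in Ioc t (t + 1), ‖f s‖) atTop (𝓝 0) :=
    tendsto_symmMean_setIntegral_Ioc_add_one hg (fun t => (norm_norm _).trans_le (hC t))
      (hμM.tendsto_symmMean_comp_add hμ1 hg (fun t => norm_nonneg _) hC herg)
  refine tendsto_symmMean_zero_of_forall_le_add_mul
    ((continuous_setIntegral_Ioc_add_one (hg.rpow_const fun _ => Or.inr (by linarith))).rpow_const
      fun _ => Or.inr (by positivity))
    (continuous_setIntegral_Ioc_add_one hg) (fun t => ?_)
    (fun ε hε => ⟨_, rpow_setIntegral_Ioc_add_one_le_add_mul hg (fun _ => norm_nonneg _) hC hp hε⟩)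
    hwindow
  exact Real.rpow_nonneg (setIntegral_nonneg measurableSet_Ioc fun s _ => by positivity) _
end Means
end

section
/- Let (T(t))_{t≥0} be a bounded strongly continuous semigroup on a Banach space X, and let δ ∈ AA(ℝ,ℝ) with inf_t δ(t) > 0 and α ∈ AAS^1(ℝ,ℝ). Then the evolution family U(t,s) = exp(∫_s^t α(τ)dτ) · T(∫_s^t δ(τ)dτ), t ≥ s, is bi-almost automorphic: for every real sequence there is a subsequence (s_k) and Ũ such that ‖U(t+s_k, s+s_k)φ - Ũ(t,s)φ‖ → 0 and ‖Ũ(t-s_k, s-s_k)φ - U(t,s)φ‖ → 0 for all t ≥ s and φ ∈ X. -/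
open MeasureTheory Set Filter

/-- (Bochner) almost automorphic functions `ℝ → X`. -/
def AlmostAutomorphic {X : Type*} [NormedAddCommGroup X] (f : ℝ → X) : Prop :=
  Continuous f ∧ ∀ σ : ℕ → ℝ, ∃ φ : ℕ → ℕ, StrictMono φ ∧ ∃ g : ℝ → X,
    MeasureTheory.StronglyMeasurable g ∧
    (∀ t : ℝ, Filter.Tendsto (fun n => f (t + σ (φ n))) Filter.atTop (nhds (g t))) ∧
    (∀ t : ℝ, Filter.Tendsto (fun n => g (t - σ (φ n))) Filter.atTop (nhds (f t)))

/-- Stepanov-`p` almost automorphic functions `ℝ → X` (`AAS^p`). -/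
def SpAlmostAutomorphic {X : Type*} [NormedAddCommGroup X] (p : ℝ) (f : ℝ → X) : Prop :=
  MeasureTheory.AEStronglyMeasurable f (volume : MeasureTheory.Measure ℝ) ∧
  (∀ t : ℝ, MeasureTheory.IntegrableOn (fun s => ‖f s‖ ^ p) (Set.Ioc t (t + 1))) ∧
  ∀ σ : ℕ → ℝ, ∃ φ : ℕ → ℕ, StrictMono φ ∧ ∃ g : ℝ → X,
    MeasureTheory.StronglyMeasurable g ∧
    (∀ t : ℝ, MeasureTheory.IntegrableOn (fun s => ‖g s‖ ^ p) (Set.Ioc t (t + 1))) ∧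
    (∀ t : ℝ, Filter.Tendsto
      (fun n => (∫ s in Set.Ioc t (t + 1), ‖f (s + σ (φ n)) - g s‖ ^ p) ^ (1 / p))
      Filter.atTop (nhds 0)) ∧
    (∀ t : ℝ, Filter.Tendsto
      (fun n => (∫ s in Set.Ioc t (t + 1), ‖g (s - σ (φ n)) - f s‖ ^ p) ^ (1 / p))
      Filter.atTop (nhds 0))

open Topology

/-!
The family `U(t,s)` depends on `α` and `δ` only through the interval integrals `∫_s^t α` and
`∫_s^t δ`, so it suffices to pass to a subsequence along which these integrals of the translates
converge. For `δ` this is dominated convergence, because an almost automorphic function is bounded.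
For `α` the Stepanov-1 convergence on unit intervals controls the `L¹` distance on every bounded
interval. Since `δ ≥ 0`, the integrals of `δ` and of its limit stay in `[0, ∞)`, where
`t ↦ T t x` is continuous; the limit family is `Ũ(t,s) = e^{∫_s^t g_α} T(∫_s^t g_δ)` with
`g_α`, `g_δ` the limits of the translates of `α`, `δ`.
-/

section

variable {E : Type*} [NormedAddCommGroup E]

theorem AlmostAutomorphic.exists_norm_le {f : ℝ → E} (hf : AlmostAutomorphic f) :
    ∃ M, ∀ t, ‖f t‖ ≤ M := by
  by_contra! hunbdd
  choose σ hσ using fun n : ℕ => hunbdd n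
  obtain ⟨φ, hφ, g, -, hlim, -⟩ := hf.2 σ
  have htop : Tendsto (fun n => ‖f (0 + σ (φ n))‖) atTop atTop :=
    tendsto_atTop_mono (fun n => by simpa using (hσ (φ n)).le)
      (tendsto_natCast_atTop_atTop.comp hφ.tendsto_atTop)
  exact not_tendsto_nhds_of_tendsto_atTop htop _ (hlim 0).norm

theorem intervalIntegrable_of_forall_integrableOn_Ioc {f : ℝ → E}
    (hf : ∀ u, IntegrableOn f (Ioc u (u + 1))) (a b : ℝ) : IntervalIntegrable f volume a b := by
  obtain ⟨N, hN⟩ := exists_nat_ge (max a b - min a b)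
  have hunit : ∀ k < N, IntervalIntegrable f volume (min a b + k) (min a b + (k + 1 : ℕ)) :=
    fun k _ => (intervalIntegrable_iff_integrableOn_Ioc_of_le (by push_cast; linarith)).mpr
      (by simpa [add_assoc] using hf (min a b + k))
  have hcover : uIcc a b ⊆ uIcc (min a b + (0 : ℕ)) (min a b + N) := by
    have hN0 : (0 : ℝ) ≤ N := N.cast_nonneg
    rw [Nat.cast_zero, add_zero]
    exact uIcc_subset_uIcc (mem_uIcc_of_le (min_le_left a b) (by linarith [le_max_left a b]))
      (mem_uIcc_of_le (min_le_right a b) (by linarith [le_max_right a b]))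
  exact (IntervalIntegrable.trans_iterate (a := fun k : ℕ => min a b + k) hunit).mono_set hcover

theorem tendsto_intervalIntegral_zero_of_forall_Ioc {F : ℕ → ℝ → ℝ}
    (hF : ∀ n a b, IntervalIntegrable (F n) volume a b) (hF0 : ∀ n τ, 0 ≤ F n τ)
    (hlim : ∀ u, Tendsto (fun n => ∫ τ in Ioc u (u + 1), F n τ) atTop (𝓝 0))
    {a b : ℝ} (hab : a ≤ b) : Tendsto (fun n => ∫ τ in a..b, F n τ) atTop (𝓝 0) := by
  obtain ⟨N, hN⟩ := exists_nat_ge (b - a)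
  have hsum : Tendsto
      (fun n => ∑ k ∈ Finset.range N, ∫ τ in (a + k)..(a + (k + 1 : ℕ)), F n τ) atTop (𝓝 0) := by
    have hpiece : ∀ k : ℕ, Tendsto (fun n => ∫ τ in (a + k)..(a + (k + 1 : ℕ)), F n τ)
        atTop (𝓝 0) := fun k => by
      rw [Nat.cast_succ, ← add_assoc]
      simpa only [intervalIntegral.integral_of_le (by linarith : a + k ≤ a + k + 1)]
        using hlim (a + k)
    simpa using tendsto_finsetSum (Finset.range N) fun k _ => hpiece k
  refine squeeze_zero (fun n => intervalIntegral.integral_nonneg hab fun τ _ => hF0 n τ)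
    (fun n => ?_) hsum
  rw [intervalIntegral.sum_integral_adjacent_intervals (a := fun k : ℕ => a + k)
    (fun k _ => hF n _ _)]
  refine intervalIntegral.integral_mono_interval (by simp) hab (by linarith)
    (Eventually.of_forall fun τ => hF0 n τ) (hF n _ _)

theorem SpAlmostAutomorphic.integrableOn_Ioc {f : ℝ → E} (hf : SpAlmostAutomorphic 1 f)
    (u : ℝ) : IntegrableOn f (Ioc u (u + 1)) :=
  (integrable_norm_iff hf.1.restrict).mp <| by
    simpa only [Real.rpow_one, IntegrableOn] using hf.2.1 u

variable [NormedSpace ℝ E]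

theorem tendsto_intervalIntegral_of_tendsto_integral_Ioc_norm_sub {f : ℕ → ℝ → E}
    {g : ℝ → E} (hf : ∀ n a b, IntervalIntegrable (f n) volume a b)
    (hg : ∀ a b, IntervalIntegrable g volume a b)
    (hlim : ∀ u, Tendsto (fun n => ∫ τ in Ioc u (u + 1), ‖f n τ - g τ‖) atTop (𝓝 0))
    (a b : ℝ) : Tendsto (fun n => ∫ τ in a..b, f n τ) atTop (𝓝 (∫ τ in a..b, g τ)) := by
  have hdist := tendsto_intervalIntegral_zero_of_forall_Ioc
    (fun n a b => ((hf n a b).sub (hg a b)).norm) (fun n τ => norm_nonneg _) hlim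
    (min_le_max (a := a) (b := b))
  refine tendsto_iff_norm_sub_tendsto_zero.mpr <|
    squeeze_zero (fun n => norm_nonneg _) (fun n => ?_) hdist
  rw [← intervalIntegral.integral_sub (hf n a b) (hg a b),
    intervalIntegral.integral_of_le min_le_max]
  exact intervalIntegral.norm_integral_le_integral_norm_uIoc

def IntegralTranslatesTendsto (f g : ℝ → E) (σ : ℕ → ℝ) : Prop :=
  ∀ s t, Tendsto (fun n => ∫ τ in (s + σ n)..(t + σ n), f τ) atTop (𝓝 (∫ τ in s..t, g τ))

theorem IntegralTranslatesTendsto.comp {f g : ℝ → E} {σ : ℕ → ℝ}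
    (h : IntegralTranslatesTendsto f g σ) {φ : ℕ → ℕ} (hφ : Tendsto φ atTop atTop) :
    IntegralTranslatesTendsto f g (σ ∘ φ) :=
  fun s t => (h s t).comp hφ

theorem IntegralTranslatesTendsto.integral_nonneg {f g : ℝ → ℝ} {σ : ℕ → ℝ}
    (h : IntegralTranslatesTendsto f g σ) (hf : ∀ a b, a ≤ b → 0 ≤ ∫ τ in a..b, f τ)
    {a b : ℝ} (hab : a ≤ b) : 0 ≤ ∫ τ in a..b, g τ :=
  ge_of_tendsto' (h a b) fun n => hf _ _ (by linarith)

theorem integralTranslatesTendsto_of_tendsto_integral_Ioc_norm_sub {f g : ℝ → E}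
    {σ : ℕ → ℝ} (hf : ∀ u, IntegrableOn f (Ioc u (u + 1)))
    (hg : ∀ u, IntegrableOn g (Ioc u (u + 1)))
    (hlim : ∀ u, Tendsto (fun n => ∫ τ in Ioc u (u + 1), ‖f (τ + σ n) - g τ‖) atTop (𝓝 0)) :
    IntegralTranslatesTendsto f g σ := by
  intro s t
  simp only [← intervalIntegral.integral_comp_add_right]
  refine tendsto_intervalIntegral_of_tendsto_integral_Ioc_norm_sub (fun n a b => ?_)
    (intervalIntegrable_of_forall_integrableOn_Ioc hg) hlim s t
  simpa using
    (intervalIntegrable_of_forall_integrableOn_Ioc hf (a + σ n) (b + σ n)).comp_add_right (σ n)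

theorem integralTranslatesTendsto_of_tendsto_comp_add {f g : ℝ → E} {σ : ℕ → ℝ}
    (hf : StronglyMeasurable f) {M : ℝ} (hM : ∀ t, ‖f t‖ ≤ M)
    (hlim : ∀ t, Tendsto (fun n => f (t + σ n)) atTop (𝓝 (g t))) :
    IntegralTranslatesTendsto f g σ := by
  intro s t
  simp only [← intervalIntegral.integral_comp_add_right]
  refine intervalIntegral.tendsto_integral_filter_of_dominated_convergence (fun _ => M)
    (Eventually.of_forall fun n => ?_) (Eventually.of_forall fun n => ?_)
    intervalIntegrable_const (Eventually.of_forall fun t _ => hlim t)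
  · exact (hf.comp_measurable (measurable_add_const (σ n))).aestronglyMeasurable
  · exact Eventually.of_forall fun t _ => hM _

theorem SpAlmostAutomorphic.exists_integralTranslatesTendsto {f : ℝ → E}
    (hf : SpAlmostAutomorphic 1 f) (σ : ℕ → ℝ) :
    ∃ φ : ℕ → ℕ, StrictMono φ ∧ ∃ g : ℝ → E,
      IntegralTranslatesTendsto f g (σ ∘ φ) ∧ IntegralTranslatesTendsto g f (-(σ ∘ φ)) := by
  obtain ⟨φ, hφ, g, hgm, hg, hfg, hgf⟩ := hf.2.2 σ
  have hg_int : ∀ u, IntegrableOn g (Ioc u (u + 1)) := fun u =>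
    (integrable_norm_iff hgm.aestronglyMeasurable.restrict).mp <| by
      simpa only [Real.rpow_one, IntegrableOn] using hg u
  refine ⟨φ, hφ, g,
    integralTranslatesTendsto_of_tendsto_integral_Ioc_norm_sub hf.integrableOn_Ioc hg_int
      fun u => ?_,
    integralTranslatesTendsto_of_tendsto_integral_Ioc_norm_sub hg_int hf.integrableOn_Ioc
      fun u => ?_⟩
  · simpa using hfg u
  · simpa [sub_eq_add_neg] using hgf u

theorem AlmostAutomorphic.exists_integralTranslatesTendsto {f : ℝ → E}
    (hf : AlmostAutomorphic f) (σ : ℕ → ℝ) :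
    ∃ φ : ℕ → ℕ, StrictMono φ ∧ ∃ g : ℝ → E,
      IntegralTranslatesTendsto f g (σ ∘ φ) ∧ IntegralTranslatesTendsto g f (-(σ ∘ φ)) := by
  obtain ⟨M, hM⟩ := hf.exists_norm_le
  obtain ⟨φ, hφ, g, hgm, hfg, hgf⟩ := hf.2 σ
  have hgM : ∀ t, ‖g t‖ ≤ M := fun t => le_of_tendsto' (hfg t).norm fun n => hM _
  exact ⟨φ, hφ, g, integralTranslatesTendsto_of_tendsto_comp_add hf.1.stronglyMeasurable hM hfg,
    integralTranslatesTendsto_of_tendsto_comp_add hgm hgM fun t => by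
      simpa [sub_eq_add_neg] using hgf t⟩

end

theorem IntegralTranslatesTendsto.tendsto_exp_smul {X : Type*} [NormedAddCommGroup X]
    [NormedSpace ℝ X] {T : ℝ → X → X} (hT : ∀ x, ContinuousOn (fun t => T t x) (Ici 0))
    {α₁ α₂ δ₁ δ₂ : ℝ → ℝ} {ρ : ℕ → ℝ} (hα : IntegralTranslatesTendsto α₁ α₂ ρ)
    (hδ : IntegralTranslatesTendsto δ₁ δ₂ ρ) (hδ₁ : ∀ a b, a ≤ b → 0 ≤ ∫ τ in a..b, δ₁ τ)
    (x : X) {s t : ℝ} (hst : s ≤ t) :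
    Tendsto (fun n => ‖Real.exp (∫ τ in (s + ρ n)..(t + ρ n), α₁ τ) •
        T (∫ τ in (s + ρ n)..(t + ρ n), δ₁ τ) x -
      Real.exp (∫ τ in s..t, α₂ τ) • T (∫ τ in s..t, δ₂ τ) x‖) atTop (𝓝 0) := by
  have hδ_within : Tendsto (fun n => ∫ τ in (s + ρ n)..(t + ρ n), δ₁ τ) atTop
      (𝓝[Ici 0] ∫ τ in s..t, δ₂ τ) :=
    tendsto_nhdsWithin_iff.mpr ⟨hδ s t, Eventually.of_forall fun n => hδ₁ _ _ (by linarith)⟩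
  refine tendsto_iff_norm_sub_tendsto_zero.mp <|
    ((Real.continuous_exp.tendsto _).comp (hα s t)).smul ((hT x _ ?_).tendsto.comp hδ_within)
  exact hδ.integral_nonneg hδ₁ hst

theorem evolution_family_bi_almostAutomorphic_general {X : Type*} [NormedAddCommGroup X]
    [NormedSpace ℝ X] (T : ℝ → X →L[ℝ] X)
    (hTcont : ∀ x : X, ContinuousOn (fun t => T t x) (Ici 0))
    (δ : ℝ → ℝ) (hδaa : AlmostAutomorphic δ) (c : ℝ) (hc : 0 < c) (hδc : ∀ t, c ≤ δ t)
    (α : ℝ → ℝ)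
    (hαaa : SpAlmostAutomorphic 1 α) :
    ∀ σ : ℕ → ℝ, ∃ φ : ℕ → ℕ, StrictMono φ ∧ ∃ V : ℝ → ℝ → X → X,
      ∀ x : X, ∀ s t : ℝ, s ≤ t →
        Filter.Tendsto (fun n =>
          ‖Real.exp (∫ τ in (s + σ (φ n))..(t + σ (φ n)), α τ) •
              T (∫ τ in (s + σ (φ n))..(t + σ (φ n)), δ τ) x - V t s x‖)
          Filter.atTop (nhds 0) ∧
        Filter.Tendsto (fun n =>
          ‖V (t - σ (φ n)) (s - σ (φ n)) x -
            Real.exp (∫ τ in s..t, α τ) • T (∫ τ in s..t, δ τ) x‖)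
          Filter.atTop (nhds 0) := by
  intro σ
  obtain ⟨φ₁, hφ₁, gδ, hδ, hδ'⟩ := hδaa.exists_integralTranslatesTendsto σ
  obtain ⟨φ₂, hφ₂, gα, hα, hα'⟩ := hαaa.exists_integralTranslatesTendsto (σ ∘ φ₁)
  have hδ_nonneg : ∀ a b, a ≤ b → 0 ≤ ∫ τ in a..b, δ τ := fun a b hab =>
    intervalIntegral.integral_nonneg hab fun u _ => hc.le.trans (hδc u)
  refine ⟨φ₁ ∘ φ₂, hφ₁.comp hφ₂,
    fun t s x => Real.exp (∫ τ in s..t, gα τ) • T (∫ τ in s..t, gδ τ) x,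
    fun x s t hst => ⟨?_, ?_⟩⟩
  · exact hα.tendsto_exp_smul hTcont (hδ.comp hφ₂.tendsto_atTop) hδ_nonneg x hst
  · have hgδ_nonneg : ∀ a b, a ≤ b → 0 ≤ ∫ τ in a..b, gδ τ := fun a b hab =>
      hδ.integral_nonneg hδ_nonneg hab
    simpa only [Function.comp_apply, Pi.neg_apply, sub_eq_add_neg] using
      hα'.tendsto_exp_smul hTcont (hδ'.comp hφ₂.tendsto_atTop) hgδ_nonneg x hst

/-- if `(T(t))_{t≥0}` is a bounded `C₀`-semigroup, `δ ∈ AA(ℝ,ℝ)` with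
`inf δ > 0`, and `α ∈ AAS¹(ℝ,ℝ)`, then the evolution family
`U(t,s) = e^{∫_s^t α} T(∫_s^t δ)` is bi-almost automorphic. -/
theorem evolution_family_bi_almostAutomorphic {X : Type*} [NormedAddCommGroup X]
    [NormedSpace ℝ X] (T : ℝ → X →L[ℝ] X)
    (hT0 : T 0 = ContinuousLinearMap.id ℝ X)
    (hTsemi : ∀ a b : ℝ, 0 ≤ a → 0 ≤ b → T (a + b) = (T a).comp (T b))
    (hTcont : ∀ x : X, ContinuousOn (fun t => T t x) (Ici 0))
    (MT : ℝ) (hMT : ∀ t : ℝ, 0 ≤ t → ‖T t‖ ≤ MT)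
    (δ : ℝ → ℝ) (hδaa : AlmostAutomorphic δ) (c : ℝ) (hc : 0 < c) (hδc : ∀ t, c ≤ δ t)
    (α : ℝ → ℝ) (hαloc : LocallyIntegrable α (volume : Measure ℝ))
    (hαaa : SpAlmostAutomorphic 1 α) :
    ∀ σ : ℕ → ℝ, ∃ φ : ℕ → ℕ, StrictMono φ ∧ ∃ V : ℝ → ℝ → X → X,
      ∀ x : X, ∀ s t : ℝ, s ≤ t →
        Filter.Tendsto (fun n =>
          ‖Real.exp (∫ τ in (s + σ (φ n))..(t + σ (φ n)), α τ) •
              T (∫ τ in (s + σ (φ n))..(t + σ (φ n)), δ τ) x - V t s x‖)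
          Filter.atTop (nhds 0) ∧
        Filter.Tendsto (fun n =>
          ‖V (t - σ (φ n)) (s - σ (φ n)) x -
            Real.exp (∫ τ in s..t, α τ) • T (∫ τ in s..t, δ τ) x‖)
          Filter.atTop (nhds 0) :=
  evolution_family_bi_almostAutomorphic_general T hTcont δ hδaa c hc hδc α hαaa
end

section
/- The measure μ on ℝ with Radon–Nikodym density ρ(t) = e^t for t ≤ 0 and ρ(t) = 1 for t > 0 satisfies: μ(ℝ) = ∞, μ([a,b]) < ∞ for all a ≤ b, and for every τ ∈ ℝ there exist β > 0 and a bounded interval I such that μ(A + τ) ≤ β μ(A) for every Borel set A disjoint from I. -/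
open MeasureTheory Set

open scoped ENNReal

/-! The density is `ρ t = exp (min t 0)`: it is at most `1`, which makes `μ` locally finite,
and equal to `1` on `(0, ∞)`, which makes `μ` infinite. Since `min · 0` is `1`-Lipschitz,
`ρ (x + τ) ≤ e^{|τ|} ρ x` everywhere, so by translation invariance of Lebesgue measure
`μ (A + τ) ≤ e^{|τ|} μ A` for every Borel set `A`: condition (M) holds with `β = e^{|τ|}`
and no exceptional interval, `I = ∅`. -/

namespace MeasureTheory.Measure

variable {α : Type*} [MeasurableSpace α] {μ : Measure α} {f : α → ℝ≥0∞}

theorem withDensity_le_self_of_le_one (hf : ∀ x, f x ≤ 1) : μ.withDensity f ≤ μ :=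
  (withDensity_mono (ae_of_all μ hf)).trans_eq withDensity_one

theorem withDensity_apply_of_eqOn_one {s : Set α} (hs : MeasurableSet s) (hf : EqOn f 1 s) :
    μ.withDensity f s = μ s := by
  rw [withDensity_apply _ hs, setLIntegral_congr_fun hs hf, Pi.one_def, setLIntegral_one]

theorem withDensity_image_add_right_le {G : Type*} [MeasurableSpace G] [AddGroup G]
    [MeasurableAdd G] {μ : Measure G} [μ.IsAddRightInvariant] {f : G → ℝ≥0∞}
    (hf : Measurable f) {c : ℝ≥0∞} {τ : G} (hfτ : ∀ x, f (x + τ) ≤ c * f x) {A : Set G}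
    (hA : MeasurableSet A) :
    μ.withDensity f ((· + τ) '' A) ≤ c * μ.withDensity f A := by
  have hemb := measurableEmbedding_addRight τ
  rw [withDensity_apply _ (hemb.measurableSet_image.2 hA), withDensity_apply _ hA,
    ← (measurePreserving_add_right μ τ).setLIntegral_comp_emb hemb,
    ← lintegral_const_mul _ hf]
  exact lintegral_mono fun x => hfτ x

end MeasureTheory.Measure

open MeasureTheory.Measure

namespace Real

theorem ite_le_zero_exp_eq_exp_min (t : ℝ) :
    (if t ≤ 0 then exp t else 1) = exp (min t 0) := by
  split_ifs with h
  · rw [min_eq_left h]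
  · rw [min_eq_right (not_le.1 h).le, exp_zero]

theorem exp_min_zero_le_one (t : ℝ) : exp (min t 0) ≤ 1 :=
  exp_le_one_iff.2 (min_le_right t 0)

theorem exp_min_zero_of_nonneg {t : ℝ} (ht : 0 ≤ t) : exp (min t 0) = 1 := by
  rw [min_eq_right ht, exp_zero]

-- `t ↦ min t 0` is `1`-Lipschitz.
theorem exp_min_zero_add_le (x τ : ℝ) : exp (min (x + τ) 0) ≤ exp |τ| * exp (min x 0) := by
  rw [← exp_add, exp_le_exp]
  rcases le_total x 0 with hx | hx
  · rw [min_eq_left hx]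
    linarith [min_le_left (x + τ) 0, le_abs_self τ]
  · rw [min_eq_right hx]
    linarith [min_le_right (x + τ) 0, abs_nonneg τ]

end Real

/-- the measure `μ` with density `ρ(t) = eᵗ` for `t ≤ 0`, `ρ(t) = 1` for
`t > 0` satisfies `μ(ℝ) = ∞`, `μ([a,b]) < ∞`, and hypothesis (M): for every `τ` there
exist `β > 0` and a bounded interval `I` with `μ(A + τ) ≤ β μ(A)` for all Borel sets `A`
disjoint from `I`. -/
theorem density_measure_satisfies_M :
    (volume.withDensity fun t : ℝ =>
        ENNReal.ofReal (if t ≤ 0 then Real.exp t else 1)) Set.univ = ⊤ ∧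
    (∀ a b : ℝ, a ≤ b → (volume.withDensity fun t : ℝ =>
        ENNReal.ofReal (if t ≤ 0 then Real.exp t else 1)) (Icc a b) < ⊤) ∧
    (∀ τ : ℝ, ∃ β : ℝ, 0 < β ∧ ∃ I : Set ℝ, Bornology.IsBounded I ∧
      ∀ A : Set ℝ, MeasurableSet A → A ∩ I = ∅ →
        (volume.withDensity fun t : ℝ =>
            ENNReal.ofReal (if t ≤ 0 then Real.exp t else 1)) ((fun a => a + τ) '' A) ≤
          ENNReal.ofReal β *
            (volume.withDensity fun t : ℝ =>
              ENNReal.ofReal (if t ≤ 0 then Real.exp t else 1)) A) := by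
  simp only [Real.ite_le_zero_exp_eq_exp_min]
  have hρ : Measurable fun t : ℝ => ENNReal.ofReal (Real.exp (min t 0)) := by fun_prop
  refine ⟨?_, fun a b _ => ?_, fun τ => ⟨Real.exp |τ|, Real.exp_pos _, ∅,
    Bornology.isBounded_empty, fun A hA _ => ?_⟩⟩
  · have hIoi : EqOn (fun t : ℝ => ENNReal.ofReal (Real.exp (min t 0))) 1 (Ioi 0) :=
      fun t ht => by simp [Real.exp_min_zero_of_nonneg (le_of_lt ht)]
    rw [← top_le_iff, ← Real.volume_Ioi (a := 0),
      ← withDensity_apply_of_eqOn_one measurableSet_Ioi hIoi]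
    exact measure_mono (subset_univ _)
  · refine (withDensity_le_self_of_le_one (fun t => ?_) (Icc a b)).trans_lt measure_Icc_lt_top
    exact ENNReal.ofReal_le_one.2 (Real.exp_min_zero_le_one t)
  · refine withDensity_image_add_right_le hρ (fun x => ?_) hA
    rw [← ENNReal.ofReal_mul (Real.exp_pos _).le]
    exact ENNReal.ofReal_le_ofReal (Real.exp_min_zero_add_le x τ)
end

section
/- Let M, δ > 0, p > 1 with conjugate q, and g ∈ BS^p(ℝ,X). For k ≥ 1 define u_k(t) = ∫_{t-k}^{t-k+1} U(t,s)P(s)g(s)ds - ∫_{t+k-1}^{t+k} Ũ(t,s)Q(s)g(s)ds, where the dichotomy estimates ‖U(t,s)P(s)‖ ≤ Me^{-δ(t-s)} (s ≤ t) and ‖Ũ(t,s)Q(t)‖ ≤ Me^{-δ(s-t)} (s > t) hold. Then ‖u_k(t)‖ ≤ 2M ‖g‖_{BS^p} ((e^{δq}-1)/(δq))^{1/q} e^{-δk} for all t ∈ ℝ, and consequently the series Σ_{k≥1} u_k converges uniformly on ℝ. -/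
open MeasureTheory Set Filter

/-!
On the window of length one at distance between `k - 1` and `k` from `t`, the dichotomy
estimates bound the integrand by `‖g s‖` times the weight `M e^{-δ |t - s|}`. Hölder's
inequality on the window splits off the Stepanov norm of `g`, and the `L^q` norm of the weight
over such a window is exactly `M ((e^{δq} - 1) / (δq))^{1/q} e^{-δk}`. These bounds decay
geometrically in `k`, so the Weierstrass M-test gives uniform convergence of `Σ u_k`.
-/

/-- A strongly continuous evolution family on a Banach space `X` which has an
exponential dichotomy on `ℝ`, with projections `P t`, constants `M, δ > 0`,
and the inverses `Utilde t s` (for `t ≤ s`) of `U s t` on the ranges of `Q = 1 - P`. -/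
structure ExpDichotomyFamily (X : Type*) [NormedAddCommGroup X] [NormedSpace ℝ X] where
  U : ℝ → ℝ → X →L[ℝ] X
  Utilde : ℝ → ℝ → X →L[ℝ] X
  P : ℝ → X →L[ℝ] X
  M : ℝ
  δ : ℝ
  M_pos : 0 < M
  δ_pos : 0 < δ
  comp : ∀ {t r s : ℝ}, s ≤ r → r ≤ t → (U t r).comp (U r s) = U t s
  idm : ∀ t : ℝ, U t t = ContinuousLinearMap.id ℝ X
  strong_cont : ∀ x : X, ContinuousOn (fun pr : ℝ × ℝ => U pr.1 pr.2 x) {pr | pr.2 ≤ pr.1}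
  proj : ∀ t : ℝ, (P t).comp (P t) = P t
  P_cont : ∀ x : X, Continuous fun t => P t x
  commute : ∀ {t s : ℝ}, s ≤ t → (U t s).comp (P s) = (P t).comp (U t s)
  inv₁ : ∀ {t s : ℝ}, t ≤ s → ∀ x : X, U s t (Utilde t s ((1 - P s) x)) = (1 - P s) x
  inv₂ : ∀ {t s : ℝ}, t ≤ s → ∀ x : X, Utilde t s (U s t ((1 - P t) x)) = (1 - P t) x
  range_tilde : ∀ {t s : ℝ}, t ≤ s → ∀ x : X,
    Utilde t s ((1 - P s) x) = (1 - P t) (Utilde t s ((1 - P s) x))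
  bound₁ : ∀ {t s : ℝ}, s ≤ t → ‖(U t s).comp (P s)‖ ≤ M * Real.exp (-δ * (t - s))
  bound₂ : ∀ {t s : ℝ}, t ≤ s → ‖(Utilde t s).comp (1 - P s)‖ ≤ M * Real.exp (-δ * (s - t))

/-- The Green's function associated to a hyperbolic evolution family:
`Γ(t,s) = U(t,s)P(s)` for `s ≤ t` and `Γ(t,s) = -Ũ(t,s)Q(s)` for `s > t`. -/
noncomputable def ExpDichotomyFamily.Green {X : Type*} [NormedAddCommGroup X]
    [NormedSpace ℝ X] (E : ExpDichotomyFamily X) (t s : ℝ) : X →L[ℝ] X :=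
  if s ≤ t then (E.U t s).comp (E.P s) else -((E.Utilde t s).comp (1 - E.P s))

section Holder

variable {α E : Type*} [MeasurableSpace α] {μ : Measure α} [NormedAddCommGroup E]

lemma memLp_ofReal_of_integrable_norm_rpow {f : α → E} {p : ℝ} (hp : 0 < p)
    (hf : AEStronglyMeasurable f μ) (hint : Integrable (fun x => ‖f x‖ ^ p) μ) :
    MemLp f (ENNReal.ofReal p) μ := by
  rwa [← integrable_norm_rpow_iff hf (by simpa using hp) ENNReal.ofReal_ne_top,
    ENNReal.toReal_ofReal hp.le]

variable [NormedSpace ℝ E]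

theorem norm_integral_le_Lp_mul_Lq_of_norm_le_mul {p q : ℝ} (hpq : p.HolderConjugate q)
    {F g : α → E} {w : α → ℝ} (hg : MemLp g (ENNReal.ofReal p) μ)
    (hw : MemLp w (ENNReal.ofReal q) μ) (hw0 : 0 ≤ᵐ[μ] w)
    (hF : ∀ᵐ x ∂μ, ‖F x‖ ≤ ‖g x‖ * w x) :
    ‖∫ x, F x ∂μ‖ ≤ (∫ x, ‖g x‖ ^ p ∂μ) ^ (1 / p) * (∫ x, w x ^ q ∂μ) ^ (1 / q) := by
  have := hpq.ennrealOfReal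
  calc ‖∫ x, F x ∂μ‖ ≤ ∫ x, ‖g x‖ * w x ∂μ :=
        norm_integral_le_of_norm_le (hg.norm.integrable_mul hw) hF
    _ ≤ _ := integral_mul_le_Lp_mul_Lq_of_nonneg hpq (ae_of_all _ fun x => norm_nonneg _) hw0
        hg.norm hw

end Holder

lemma Continuous.memLp_restrict_Ioc {E : Type*} [NormedAddCommGroup E] {w : ℝ → E}
    (hw : Continuous w) {q : ℝ} (hq : 0 < q) (a b : ℝ) :
    MemLp w (ENNReal.ofReal q) (volume.restrict (Ioc a b)) :=
  memLp_ofReal_of_integrable_norm_rpow hq hw.aestronglyMeasurable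
    ((hw.norm.rpow_const fun _ => Or.inr hq.le).integrableOn_Ioc)

lemma integral_exp_const_mul {c : ℝ} (hc : c ≠ 0) (a b : ℝ) :
    ∫ x in a..b, Real.exp (c * x) = (Real.exp (c * b) - Real.exp (c * a)) / c := by
  rw [intervalIntegral.integral_comp_mul_left Real.exp hc, integral_exp, smul_eq_mul,
    inv_mul_eq_div]

lemma rpow_integral_exp_unit_window {M δ q : ℝ} (hM : 0 ≤ M) (hδ : 0 < δ) (hq : 0 < q) (k : ℝ) :
    (∫ r in (k - 1)..k, (M * Real.exp (-δ * r)) ^ q) ^ (1 / q) =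
      M * ((Real.exp (δ * q) - 1) / (δ * q)) ^ (1 / q) * Real.exp (-δ * k) := by
  have hδq : 0 < δ * q := mul_pos hδ hq
  have hpow : ∀ r, (M * Real.exp (-δ * r)) ^ q = M ^ q * Real.exp (-(δ * q) * r) := fun r => by
    rw [Real.mul_rpow hM (Real.exp_pos _).le, ← Real.exp_mul]
    ring_nf
  have hint : ∫ r in (k - 1)..k, (M * Real.exp (-δ * r)) ^ q =
      (M * Real.exp (-δ * k)) ^ q * ((Real.exp (δ * q) - 1) / (δ * q)) := by
    rw [intervalIntegral.integral_congr fun r _ => hpow r, intervalIntegral.integral_const_mul,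
      integral_exp_const_mul (neg_ne_zero.mpr hδq.ne'),
      Real.mul_rpow hM (Real.exp_pos _).le, ← Real.exp_mul,
      show -(δ * q) * (k - 1) = δ * q + -(δ * q) * k by ring, Real.exp_add]
    field_simp
    ring_nf
  rw [hint, Real.mul_rpow (by positivity)
    (div_nonneg (by linarith [Real.add_one_le_exp (δ * q)]) hδq.le), one_div,
    Real.rpow_rpow_inv (by positivity) hq.ne']
  ring

theorem exists_tendstoUniformly_sum_Icc_of_norm_le {β F : Type*} [NormedAddCommGroup F]
    [CompleteSpace F] {f : ℕ → β → F} {b : ℕ → ℝ} (hb : Summable b)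
    (hfb : ∀ k, 1 ≤ k → ∀ x, ‖f k x‖ ≤ b k) :
    ∃ v, TendstoUniformly (fun n x => ∑ k ∈ Finset.Icc 1 n, f k x) v atTop := by
  refine ⟨fun x => ∑' k, f (k + 1) x, ?_⟩
  have hsum : ∀ n x, ∑ k ∈ Finset.Icc 1 n, f k x = ∑ k ∈ Finset.range n, f (k + 1) x := by
    intro n x
    rw [← Finset.Ico_add_one_right_eq_Icc, Finset.sum_Ico_eq_sum_range]
    simp [add_comm]
  simp_rw [hsum]
  exact tendstoUniformly_tsum_nat ((summable_nat_add_iff 1).mpr hb)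
    fun k x => hfb (k + 1) (Nat.le_add_left 1 k) x

namespace ExpDichotomyFamily

variable {X : Type*} [NormedAddCommGroup X] [NormedSpace ℝ X] (E : ExpDichotomyFamily X)

lemma norm_U_P_apply_le {t s : ℝ} (hst : s ≤ t) (x : X) :
    ‖E.U t s (E.P s x)‖ ≤ ‖x‖ * (E.M * Real.exp (-E.δ * (t - s))) :=
  (((E.U t s).comp (E.P s)).le_opNorm x).trans <| by
    rw [mul_comm]; exact mul_le_mul_of_nonneg_left (E.bound₁ hst) (norm_nonneg x)

lemma norm_Utilde_Q_apply_le {t s : ℝ} (hts : t ≤ s) (x : X) :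
    ‖E.Utilde t s ((1 - E.P s) x)‖ ≤ ‖x‖ * (E.M * Real.exp (-E.δ * (s - t))) :=
  (((E.Utilde t s).comp (1 - E.P s)).le_opNorm x).trans <| by
    rw [mul_comm]; exact mul_le_mul_of_nonneg_left (E.bound₂ hts) (norm_nonneg x)

variable {p q : ℝ} {g : ℝ → X} {t k : ℝ}

lemma norm_integral_stable_window_le (hpq : p.HolderConjugate q) (hk : 1 ≤ k)
    (hg : MemLp g (ENNReal.ofReal p) (volume.restrict (Ioc (t - k) (t - k + 1)))) :
    ‖∫ s in Ioc (t - k) (t - k + 1), E.U t s (E.P s (g s))‖ ≤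
      (∫ s in Ioc (t - k) (t - k + 1), ‖g s‖ ^ p) ^ (1 / p) *
        (E.M * ((Real.exp (E.δ * q) - 1) / (E.δ * q)) ^ (1 / q) * Real.exp (-E.δ * k)) := by
  have hF : ∀ᵐ s ∂volume.restrict (Ioc (t - k) (t - k + 1)),
      ‖E.U t s (E.P s (g s))‖ ≤ ‖g s‖ * (E.M * Real.exp (-E.δ * (t - s))) := by
    filter_upwards [ae_restrict_mem measurableSet_Ioc] with s hs
    exact E.norm_U_P_apply_le (by linarith [hs.2]) (g s)
  have hweight : ∫ s in Ioc (t - k) (t - k + 1), (E.M * Real.exp (-E.δ * (t - s))) ^ q =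
      ∫ r in (k - 1)..k, (E.M * Real.exp (-E.δ * r)) ^ q := by
    rw [← intervalIntegral.integral_of_le (by linarith),
      intervalIntegral.integral_comp_sub_left (fun r => (E.M * Real.exp (-E.δ * r)) ^ q)]
    congr 1 <;> ring
  refine (norm_integral_le_Lp_mul_Lq_of_norm_le_mul hpq hg
    ((by fun_prop : Continuous fun s => E.M * Real.exp (-E.δ * (t - s))).memLp_restrict_Ioc
      hpq.symm.pos _ _)
    (ae_of_all _ fun s => by have := E.M_pos; positivity) hF).trans_eq ?_
  rw [hweight, rpow_integral_exp_unit_window E.M_pos.le E.δ_pos hpq.symm.pos]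

lemma norm_integral_unstable_window_le (hpq : p.HolderConjugate q) (hk : 1 ≤ k)
    (hg : MemLp g (ENNReal.ofReal p) (volume.restrict (Ioc (t + k - 1) (t + k)))) :
    ‖∫ s in Ioc (t + k - 1) (t + k), E.Utilde t s ((1 - E.P s) (g s))‖ ≤
      (∫ s in Ioc (t + k - 1) (t + k), ‖g s‖ ^ p) ^ (1 / p) *
        (E.M * ((Real.exp (E.δ * q) - 1) / (E.δ * q)) ^ (1 / q) * Real.exp (-E.δ * k)) := by
  have hF : ∀ᵐ s ∂volume.restrict (Ioc (t + k - 1) (t + k)),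
      ‖E.Utilde t s ((1 - E.P s) (g s))‖ ≤ ‖g s‖ * (E.M * Real.exp (-E.δ * (s - t))) := by
    filter_upwards [ae_restrict_mem measurableSet_Ioc] with s hs
    exact E.norm_Utilde_Q_apply_le (by linarith [hs.1]) (g s)
  have hweight : ∫ s in Ioc (t + k - 1) (t + k), (E.M * Real.exp (-E.δ * (s - t))) ^ q =
      ∫ r in (k - 1)..k, (E.M * Real.exp (-E.δ * r)) ^ q := by
    rw [← intervalIntegral.integral_of_le (by linarith),
      intervalIntegral.integral_comp_sub_right (fun r => (E.M * Real.exp (-E.δ * r)) ^ q)]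
    congr 1 <;> ring
  refine (norm_integral_le_Lp_mul_Lq_of_norm_le_mul hpq hg
    ((by fun_prop : Continuous fun s => E.M * Real.exp (-E.δ * (s - t))).memLp_restrict_Ioc
      hpq.symm.pos _ _)
    (ae_of_all _ fun s => by have := E.M_pos; positivity) hF).trans_eq ?_
  rw [hweight, rpow_integral_exp_unit_window E.M_pos.le E.δ_pos hpq.symm.pos]

lemma norm_sub_window_integrals_le (hpq : p.HolderConjugate q) (hk : 1 ≤ k) {C : ℝ}
    (hmeas : AEStronglyMeasurable g volume)
    (hloc : ∀ t : ℝ, IntegrableOn (fun s => ‖g s‖ ^ p) (Ioc t (t + 1)))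
    (hC : ∀ t : ℝ, (∫ s in Ioc t (t + 1), ‖g s‖ ^ p) ^ (1 / p) ≤ C) :
    ‖(∫ s in Ioc (t - k) (t - k + 1), E.U t s (E.P s (g s))) -
        ∫ s in Ioc (t + k - 1) (t + k), E.Utilde t s ((1 - E.P s) (g s))‖ ≤
      2 * E.M * C * ((Real.exp (E.δ * q) - 1) / (E.δ * q)) ^ (1 / q) * Real.exp (-E.δ * k) := by
  have hg : ∀ a, MemLp g (ENNReal.ofReal p) (volume.restrict (Ioc a (a + 1))) := fun a =>
    memLp_ofReal_of_integrable_norm_rpow hpq.pos hmeas.restrict (hloc a)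
  have hδq : 0 ≤ E.δ * q := mul_nonneg E.δ_pos.le hpq.symm.nonneg
  have hW : 0 ≤ E.M * ((Real.exp (E.δ * q) - 1) / (E.δ * q)) ^ (1 / q) * Real.exp (-E.δ * k) :=
    mul_nonneg (mul_nonneg E.M_pos.le (Real.rpow_nonneg
      (div_nonneg (by linarith [Real.add_one_le_exp (E.δ * q)]) hδq) _)) (Real.exp_pos _).le
  have hstable := (E.norm_integral_stable_window_le hpq hk (hg (t - k))).trans
    (mul_le_mul_of_nonneg_right (hC (t - k)) hW)
  have hunstable := (E.norm_integral_unstable_window_le hpq hk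
    (by simpa using hg (t + k - 1))).trans
    (mul_le_mul_of_nonneg_right (by simpa using hC (t + k - 1)) hW)
  calc _ ≤ _ + _ := norm_sub_le _ _
    _ ≤ _ := add_le_add hstable hunstable
    _ = _ := by ring

end ExpDichotomyFamily

theorem green_pieces_bound_and_uniform_convergence_general {X : Type*} [NormedAddCommGroup X]
    [NormedSpace ℝ X] [CompleteSpace X] (E : ExpDichotomyFamily X)
    (p q C : ℝ) (hp : 1 < p) (hpq : 1 / p + 1 / q = 1)
    (g : ℝ → X) (hmeas : AEStronglyMeasurable g (volume : Measure ℝ))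
    (hloc : ∀ t : ℝ, IntegrableOn (fun s => ‖g s‖ ^ p) (Ioc t (t + 1)))
    (hC : ∀ t : ℝ, (∫ s in Ioc t (t + 1), ‖g s‖ ^ p) ^ (1 / p) ≤ C)
    (u : ℕ → ℝ → X)
    (hu : ∀ k : ℕ, ∀ t : ℝ, u k t =
      (∫ s in Ioc (t - k) (t - k + 1), E.U t s (E.P s (g s))) -
        ∫ s in Ioc (t + k - 1) (t + k), E.Utilde t s ((1 - E.P s) (g s))) :
    (∀ k : ℕ, 1 ≤ k → ∀ t : ℝ, ‖u k t‖ ≤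
      2 * E.M * C * ((Real.exp (E.δ * q) - 1) / (E.δ * q)) ^ (1 / q) *
        Real.exp (-E.δ * k)) ∧
    ∃ v : ℝ → X, TendstoUniformly
      (fun n : ℕ => fun t : ℝ => ∑ k ∈ Finset.Icc 1 n, u k t) v atTop := by
  have hpq' : p.HolderConjugate q :=
    Real.holderConjugate_iff.mpr ⟨hp, by simpa only [one_div] using hpq⟩
  have hbound : ∀ k : ℕ, 1 ≤ k → ∀ t : ℝ, ‖u k t‖ ≤
      2 * E.M * C * ((Real.exp (E.δ * q) - 1) / (E.δ * q)) ^ (1 / q) *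
        Real.exp (-E.δ * k) := fun k hk t => by
    rw [hu]
    exact E.norm_sub_window_integrals_le hpq' (by exact_mod_cast hk) hmeas hloc hC
  have hsummable : Summable fun k : ℕ => 2 * E.M * C *
      ((Real.exp (E.δ * q) - 1) / (E.δ * q)) ^ (1 / q) * Real.exp (-E.δ * k) :=
    Summable.mul_left _ <| by
      simpa only [mul_comm] using Real.summable_exp_nat_mul_iff.mpr (neg_lt_zero.mpr E.δ_pos)
  exact ⟨hbound, exists_tendstoUniformly_sum_Icc_of_norm_le hsummable hbound⟩

/-- for `g ∈ BS^p(ℝ,X)` (`p > 1`, conjugate `q`), the pieces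
`u_k(t) = ∫_{t-k}^{t-k+1} U(t,s)P(s)g(s)ds - ∫_{t+k-1}^{t+k} Ũ(t,s)Q(s)g(s)ds` satisfy
`‖u_k(t)‖ ≤ 2M ‖g‖_{BS^p} ((e^{δq}-1)/(δq))^{1/q} e^{-δk}`, and the series `Σ_{k≥1} u_k`
converges uniformly on `ℝ`. -/
theorem green_pieces_bound_and_uniform_convergence {X : Type*} [NormedAddCommGroup X]
    [NormedSpace ℝ X] [CompleteSpace X] (E : ExpDichotomyFamily X)
    (p q C : ℝ) (hp : 1 < p) (hpq : 1 / p + 1 / q = 1) (hC0 : 0 ≤ C)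
    (g : ℝ → X) (hmeas : AEStronglyMeasurable g (volume : Measure ℝ))
    (hloc : ∀ t : ℝ, IntegrableOn (fun s => ‖g s‖ ^ p) (Ioc t (t + 1)))
    (hC : ∀ t : ℝ, (∫ s in Ioc t (t + 1), ‖g s‖ ^ p) ^ (1 / p) ≤ C)
    (u : ℕ → ℝ → X)
    (hu : ∀ k : ℕ, ∀ t : ℝ, u k t =
      (∫ s in Ioc (t - k) (t - k + 1), E.U t s (E.P s (g s))) -
        ∫ s in Ioc (t + k - 1) (t + k), E.Utilde t s ((1 - E.P s) (g s))) :
    (∀ k : ℕ, 1 ≤ k → ∀ t : ℝ, ‖u k t‖ ≤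
      2 * E.M * C * ((Real.exp (E.δ * q) - 1) / (E.δ * q)) ^ (1 / q) *
        Real.exp (-E.δ * k)) ∧
    ∃ v : ℝ → X, TendstoUniformly
      (fun n : ℕ => fun t : ℝ => ∑ k ∈ Finset.Icc 1 n, u k t) v atTop :=
  green_pieces_bound_and_uniform_convergence_general E p q C hp hpq g hmeas hloc hC u hu
end
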